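/- arXiv:2503.05889 — 11 statements merged into one kernel-verified Lean document; each statement's English description precedes it below -/
import Mathlib

section
/- Let A, B, C, D > 0 be real numbers and let r, s, η be real exponents with 0 < r ≤ s < 1 and 2 < η. Define f : (0, ∞) → ℝ by f(t) = (A t² − B t^η)/(C t^r + D t^s). Then f has exactly one critical point: there is a unique t₀ > 0 with f'(t₀) = 0; moreover t₀ is a global maximum point of f, i.e. f(t) ≤ f(t₀) for every t > 0. -/
open Set

/-- For `f(t) = (A t² − B t^η)/(C t^r + D t^s)` on `(0, ∞)` with
`A, B, C, D > 0`, `0 < r ≤ s < 1` and `2 < η`, there is a unique `t₀ > 0` with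
`f'(t₀) = 0`, and `t₀` is a global maximum point of `f` on `(0, ∞)`. -/
theorem stmt_0 (A B C D r s η : ℝ)
    (hA : 0 < A) (hB : 0 < B) (hC : 0 < C) (hD : 0 < D)
    (hr : 0 < r) (hrs : r ≤ s) (hs : s < 1) (hη : 2 < η)
    (f : ℝ → ℝ)
    (hf : f = fun t : ℝ => (A * t ^ (2 : ℝ) - B * t ^ η) / (C * t ^ r + D * t ^ s)) :
    ∃ t₀ : ℝ, 0 < t₀ ∧ deriv f t₀ = 0 ∧
      (∀ t : ℝ, 0 < t → deriv f t = 0 → t = t₀) ∧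
      (∀ t : ℝ, 0 < t → f t ≤ f t₀) := by
  subst hf
  have hη2 : (0:ℝ) < η - 2 := by linarith
  have hsr : (0:ℝ) ≤ s - r := by linarith
  set P1 := A * C * (2 - r) with hP1
  set P2 := A * D * (2 - s) with hP2
  set P3 := B * C * (η - r) with hP3
  set P4 := B * D * (η - s) with hP4
  have hP1p : 0 < P1 := by rw [hP1]; apply mul_pos (mul_pos hA hC); linarith
  have hP2p : 0 < P2 := by rw [hP2]; apply mul_pos (mul_pos hA hD); linarith
  have hP3p : 0 < P3 := by rw [hP3]; apply mul_pos (mul_pos hB hC); linarith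
  have hP4p : 0 < P4 := by rw [hP4]; apply mul_pos (mul_pos hB hD); linarith
  set Ψ : ℝ → ℝ := fun t => (P1 + P2 * t ^ (s - r)) / (P3 + P4 * t ^ (s - r)) with hΨ
  set W : ℝ → ℝ := fun t => t ^ (η - 2) - Ψ t with hW
  have hden : ∀ t : ℝ, 0 < t → 0 < P3 + P4 * t ^ (s - r) := by
    intro t ht
    have h1 := Real.rpow_pos_of_pos ht (s - r)
    have h2 := mul_pos hP4p h1
    linarith
  have cross : P2 * P3 ≤ P1 * P4 := by
    have h1 : P1 * P4 - P2 * P3 = (A * B * C * D) * ((s - r) * (η - 2)) := by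
      rw [hP1, hP2, hP3, hP4]; ring
    nlinarith [mul_nonneg hsr hη2.le, mul_pos (mul_pos (mul_pos hA hB) hC) hD]
  -- Ψ is antitone on (0,∞)
  have hΨanti : ∀ t1 t2 : ℝ, 0 < t1 → t1 ≤ t2 → Ψ t2 ≤ Ψ t1 := by
    intro t1 t2 h1 h12
    have hx : t1 ^ (s - r) ≤ t2 ^ (s - r) := Real.rpow_le_rpow h1.le h12 hsr
    have hx1 : (0:ℝ) < t1 ^ (s - r) := Real.rpow_pos_of_pos h1 _
    have d1 := hden t1 h1
    have d2 := hden t2 (lt_of_lt_of_le h1 h12)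
    rw [hΨ]
    dsimp only
    rw [div_le_div_iff₀ d2 d1]
    nlinarith [mul_nonneg (sub_nonneg.2 cross) (sub_nonneg.2 hx)]
  -- W is strictly monotone on (0,∞)
  have hWmono : StrictMonoOn W (Ioi 0) := by
    intro t1 h1 t2 h2 h12
    have h1' : (0:ℝ) < t1 := h1
    have hy : t1 ^ (η - 2) < t2 ^ (η - 2) := Real.rpow_lt_rpow h1'.le h12 hη2
    have hΨ' := hΨanti t1 t2 h1' h12.le
    rw [hW]
    dsimp only
    linarith
  -- bounds for Ψ
  set m := min (P1 / P3) (P2 / P4) with hm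
  set M := max (P1 / P3) (P2 / P4) with hM
  have hmp : 0 < m := lt_min (div_pos hP1p hP3p) (div_pos hP2p hP4p)
  have hMp : 0 < M := lt_of_lt_of_le (div_pos hP1p hP3p) (le_max_left _ _)
  have hmM : m ≤ M := min_le_max
  have hΨlb : ∀ t : ℝ, 0 < t → m ≤ Ψ t := by
    intro t ht
    have hx : (0:ℝ) ≤ t ^ (s - r) := (Real.rpow_pos_of_pos ht _).le
    have d := hden t ht
    have h1 : m * P3 ≤ P1 := (le_div_iff₀ hP3p).mp (min_le_left _ _)
    have h2 : m * P4 ≤ P2 := (le_div_iff₀ hP4p).mp (min_le_right _ _)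
    rw [hΨ]
    dsimp only
    rw [le_div_iff₀ d]
    nlinarith [mul_le_mul_of_nonneg_right h2 hx]
  have hΨub : ∀ t : ℝ, 0 < t → Ψ t ≤ M := by
    intro t ht
    have hx : (0:ℝ) ≤ t ^ (s - r) := (Real.rpow_pos_of_pos ht _).le
    have d := hden t ht
    have h1 : P1 ≤ M * P3 := by
      have := le_max_left (P1 / P3) (P2 / P4)
      exact (div_le_iff₀ hP3p).mp this
    have h2 : P2 ≤ M * P4 := by
      have := le_max_right (P1 / P3) (P2 / P4)
      exact (div_le_iff₀ hP4p).mp this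
    rw [hΨ]
    dsimp only
    rw [div_le_iff₀ d]
    nlinarith [mul_le_mul_of_nonneg_right h2 hx]
  -- endpoints for the IVT
  set ta := (m / 2) ^ (η - 2)⁻¹ with hta
  set tb := (M + 1) ^ (η - 2)⁻¹ with htb
  have htap : 0 < ta := Real.rpow_pos_of_pos (by linarith) _
  have htbp : 0 < tb := Real.rpow_pos_of_pos (by linarith) _
  have htaθ : ta ^ (η - 2) = m / 2 := by
    rw [hta, ← Real.rpow_mul (by linarith : (0:ℝ) ≤ m / 2),
      inv_mul_cancel₀ (ne_of_gt hη2), Real.rpow_one]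
  have htbθ : tb ^ (η - 2) = M + 1 := by
    rw [htb, ← Real.rpow_mul (by linarith : (0:ℝ) ≤ M + 1),
      inv_mul_cancel₀ (ne_of_gt hη2), Real.rpow_one]
  have hWta : W ta < 0 := by
    have h := hΨlb ta htap
    rw [hW]; dsimp only
    rw [htaθ]
    linarith
  have hWtb : 0 < W tb := by
    have h := hΨub tb htbp
    rw [hW]; dsimp only
    rw [htbθ]
    linarith
  have htab : ta ≤ tb := by
    by_contra hcon
    push_neg at hcon
    have h := Real.rpow_le_rpow htbp.le hcon.le hη2.le
    rw [htaθ, htbθ] at h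
    linarith
  -- continuity of W
  have hWcont : ContinuousOn W (Icc ta tb) := by
    have hsub : Icc ta tb ⊆ Ioi 0 := fun x hx => lt_of_lt_of_le htap hx.1
    apply ContinuousOn.mono _ hsub
    have hc1 : ContinuousOn (fun t : ℝ => t ^ (η - 2)) (Ioi 0) := fun x hx =>
      (Real.continuousAt_rpow_const x _ (Or.inl (ne_of_gt hx))).continuousWithinAt
    have hcx : ContinuousOn (fun t : ℝ => t ^ (s - r)) (Ioi 0) := fun x hx =>
      (Real.continuousAt_rpow_const x _ (Or.inl (ne_of_gt hx))).continuousWithinAt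
    rw [hW, hΨ]
    exact hc1.sub ((continuousOn_const.add (continuousOn_const.mul hcx)).div
      (continuousOn_const.add (continuousOn_const.mul hcx))
      (fun x hx => ne_of_gt (hden x hx)))
  obtain ⟨t₀, ht₀mem, hWt₀⟩ := intermediate_value_Icc htab hWcont ⟨hWta.le, hWtb.le⟩
  have ht₀p : 0 < t₀ := lt_of_lt_of_le htap ht₀mem.1
  -- positivity of denominator
  have hQpos : ∀ t : ℝ, 0 < t → 0 < C * t ^ r + D * t ^ s := by
    intro t ht
    have h1 := mul_pos hC (Real.rpow_pos_of_pos ht r)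
    have h2 := mul_pos hD (Real.rpow_pos_of_pos ht s)
    linarith
  -- the derivative of f
  have hfd : ∀ t : ℝ, 0 < t →
      HasDerivAt (fun t : ℝ => (A * t ^ (2:ℝ) - B * t ^ η) / (C * t ^ r + D * t ^ s))
      (((A * ((2:ℝ) * t ^ ((2:ℝ) - 1)) - B * (η * t ^ (η - 1))) * (C * t ^ r + D * t ^ s)
        - (A * t ^ (2:ℝ) - B * t ^ η) * (C * (r * t ^ (r - 1)) + D * (s * t ^ (s - 1))))
        / (C * t ^ r + D * t ^ s) ^ 2) t := by
    intro t ht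
    have h2 : HasDerivAt (fun t : ℝ => t ^ (2:ℝ)) ((2:ℝ) * t ^ ((2:ℝ) - 1)) t :=
      Real.hasDerivAt_rpow_const (Or.inl ht.ne')
    have hηd : HasDerivAt (fun t : ℝ => t ^ η) (η * t ^ (η - 1)) t :=
      Real.hasDerivAt_rpow_const (Or.inl ht.ne')
    have hrd : HasDerivAt (fun t : ℝ => t ^ r) (r * t ^ (r - 1)) t :=
      Real.hasDerivAt_rpow_const (Or.inl ht.ne')
    have hsd : HasDerivAt (fun t : ℝ => t ^ s) (s * t ^ (s - 1)) t :=
      Real.hasDerivAt_rpow_const (Or.inl ht.ne')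
    exact ((h2.const_mul A).sub (hηd.const_mul B)).div
      ((hrd.const_mul C).add (hsd.const_mul D)) (ne_of_gt (hQpos t ht))
  -- the closed form of the derivative
  have hderiv : ∀ t : ℝ, 0 < t →
      deriv (fun t : ℝ => (A * t ^ (2:ℝ) - B * t ^ η) / (C * t ^ r + D * t ^ s)) t
      = (t ^ (r + 1) * (P3 + P4 * t ^ (s - r)) / (C * t ^ r + D * t ^ s) ^ 2) * (-(W t)) := by
    intro t ht
    rw [(hfd t ht).deriv]
    have hx : ∀ a b : ℝ, t ^ (a + b) = t ^ a * t ^ b := fun a b => Real.rpow_add ht a b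
    have e1 : t ^ ((2:ℝ) - 1) * t ^ r = t ^ (r + 1) := by rw [← hx]; congr 1; ring
    have e2 : t ^ ((2:ℝ) - 1) * t ^ s = t ^ (s + 1) := by rw [← hx]; congr 1; ring
    have e3 : t ^ (η - 1) * t ^ r = t ^ (η + r - 1) := by rw [← hx]; congr 1; ring
    have e4 : t ^ (η - 1) * t ^ s = t ^ (η + s - 1) := by rw [← hx]; congr 1; ring
    have e5 : t ^ (2:ℝ) * t ^ (r - 1) = t ^ (r + 1) := by rw [← hx]; congr 1; ring
    have e6 : t ^ (2:ℝ) * t ^ (s - 1) = t ^ (s + 1) := by rw [← hx]; congr 1; ring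
    have e7 : t ^ η * t ^ (r - 1) = t ^ (η + r - 1) := by rw [← hx]; congr 1; ring
    have e8 : t ^ η * t ^ (s - 1) = t ^ (η + s - 1) := by rw [← hx]; congr 1; ring
    have e9 : t ^ (r + 1) * t ^ (s - r) = t ^ (s + 1) := by rw [← hx]; congr 1; ring
    have e10 : t ^ (r + 1) * t ^ (η - 2) = t ^ (η + r - 1) := by rw [← hx]; congr 1; ring
    have e11 : t ^ (r + 1) * (t ^ (s - r) * t ^ (η - 2)) = t ^ (η + s - 1) := by
      rw [← hx, ← hx]; congr 1; ring
    have hΨt : (P3 + P4 * t ^ (s - r)) * Ψ t = P1 + P2 * t ^ (s - r) := by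
      rw [hΨ]
      dsimp only
      rw [mul_div_cancel₀ _ (ne_of_gt (hden t ht))]
    have key2 : (P3 + P4 * t ^ (s - r)) * (-(W t))
        = P1 + P2 * t ^ (s - r) - (P3 + P4 * t ^ (s - r)) * t ^ (η - 2) := by
      rw [hW]
      dsimp only
      linear_combination hΨt
    have key : (A * ((2:ℝ) * t ^ ((2:ℝ) - 1)) - B * (η * t ^ (η - 1))) * (C * t ^ r + D * t ^ s)
        - (A * t ^ (2:ℝ) - B * t ^ η) * (C * (r * t ^ (r - 1)) + D * (s * t ^ (s - 1)))
        = t ^ (r + 1) * ((P3 + P4 * t ^ (s - r)) * (-(W t))) := by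
      rw [key2]
      linear_combination (2*A*C)*e1 + (2*A*D)*e2 - (B*η*C)*e3 - (B*η*D)*e4
        - (A*C*r)*e5 - (A*D*s)*e6 + (B*C*r)*e7 + (B*D*s)*e8
        - P2*e9 + P3*e10 + P4*e11
        - (t ^ (r+1))*hP1 - (t ^ (s+1))*hP2 + (t ^ (η+r-1))*hP3 + (t ^ (η+s-1))*hP4
    rw [key]
    ring
  -- sign of W away from t₀
  have hWneg : ∀ t : ℝ, 0 < t → t < t₀ → W t < 0 := by
    intro t ht h
    have := hWmono (mem_Ioi.mpr ht) (mem_Ioi.mpr ht₀p) h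
    rw [hWt₀] at this
    exact this
  have hWpos : ∀ t : ℝ, t₀ < t → 0 < W t := by
    intro t h
    have := hWmono (mem_Ioi.mpr ht₀p) (mem_Ioi.mpr (lt_trans ht₀p h)) h
    rw [hWt₀] at this
    exact this
  have hcpos : ∀ t : ℝ, 0 < t →
      0 < t ^ (r + 1) * (P3 + P4 * t ^ (s - r)) / (C * t ^ r + D * t ^ s) ^ 2 := by
    intro t ht
    exact div_pos (mul_pos (Real.rpow_pos_of_pos ht _) (hden t ht))
      (pow_pos (hQpos t ht) 2)
  refine ⟨t₀, ht₀p, ?_, ?_, ?_⟩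
  · rw [hderiv t₀ ht₀p, hWt₀]
    ring
  · intro t ht h0
    rw [hderiv t ht] at h0
    have hWt : W t = 0 := by
      rcases mul_eq_zero.mp h0 with h | h
      · exact absurd h (ne_of_gt (hcpos t ht))
      · linarith [neg_eq_zero.mp h]
    exact hWmono.injOn (mem_Ioi.mpr ht) (mem_Ioi.mpr ht₀p) (by rw [hWt, hWt₀])
  · have hmono : StrictMonoOn
        (fun t : ℝ => (A * t ^ (2:ℝ) - B * t ^ η) / (C * t ^ r + D * t ^ s)) (Ioc 0 t₀) := by
      apply strictMonoOn_of_deriv_pos (convex_Ioc _ _)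
      · exact fun t ht => ((hfd t ht.1).continuousAt).continuousWithinAt
      · intro t ht
        rw [interior_Ioc] at ht
        rw [hderiv t ht.1]
        have := hWneg t ht.1 ht.2
        exact mul_pos (hcpos t ht.1) (by linarith)
    have hanti : StrictAntiOn
        (fun t : ℝ => (A * t ^ (2:ℝ) - B * t ^ η) / (C * t ^ r + D * t ^ s)) (Ici t₀) := by
      apply strictAntiOn_of_deriv_neg (convex_Ici _)
      · exact fun t ht => ((hfd t (lt_of_lt_of_le ht₀p ht)).continuousAt).continuousWithinAt
      · intro t ht
        rw [interior_Ici] at ht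
        rw [hderiv t (lt_trans ht₀p ht)]
        have := hWpos t ht
        exact mul_neg_of_pos_of_neg (hcpos t (lt_trans ht₀p ht)) (by linarith)
    intro t ht
    rcases lt_trichotomy t t₀ with h | h | h
    · exact (hmono ⟨ht, h.le⟩ ⟨ht₀p, le_refl _⟩ h).le
    · rw [h]
    · exact (hanti (self_mem_Ici) (mem_Ici.mpr h.le) h).le
end

section
/- Each of the fiber maps Q_n and Q_e has a unique critical point on (0, ∞): there exist unique t_n > 0 and t_e > 0 with Q_n'(t_n) = 0 and Q_e'(t_e) = 0; moreover t_n is a global maximum point of Q_n (Q_n(t) ≤ Q_n(t_n) for all t > 0) and t_e is a global maximum point of Q_e (Q_e(t) ≤ Q_e(t_e) for all t > 0). -/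
open Real Set

set_option maxHeartbeats 2000000 in
lemma fiber_max (a b c d r s γ : ℝ)
    (ha : 0 < a) (hb : 0 < b) (hc : 0 < c) (hd : 0 < d)
    (hs : 0 < s) (hsr : s ≤ r) (hr : r < 1) (hγ : 2 < γ) :
    ∃ tn : ℝ, 0 < tn ∧
      deriv (fun t : ℝ => (a * t ^ (2:ℝ) - b * t ^ γ) / (c * t ^ r + d * t ^ s)) tn = 0 ∧
      (∀ t : ℝ, 0 < t →
        deriv (fun t : ℝ => (a * t ^ (2:ℝ) - b * t ^ γ) / (c * t ^ r + d * t ^ s)) t = 0 →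
        t = tn) ∧
      (∀ t : ℝ, 0 < t →
        (a * t ^ (2:ℝ) - b * t ^ γ) / (c * t ^ r + d * t ^ s) ≤
        (a * tn ^ (2:ℝ) - b * tn ^ γ) / (c * tn ^ r + d * tn ^ s)) := by
  set F : ℝ → ℝ := fun t => (a * t ^ (2:ℝ) - b * t ^ γ) / (c * t ^ r + d * t ^ s) with hF
  set c1 : ℝ := a * c * (2 - r) with hc1
  set c2 : ℝ := a * d * (2 - s) with hc2
  set c3 : ℝ := b * c * (γ - r) with hc3
  set c4 : ℝ := b * d * (γ - s) with hc4
  have hr2 : (0:ℝ) < 2 - r := by linarith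
  have hs2 : (0:ℝ) < 2 - s := by linarith
  have hγr : (0:ℝ) < γ - r := by linarith
  have hγs : (0:ℝ) < γ - s := by linarith
  have hc1p : 0 < c1 := by rw [hc1]; positivity
  have hc2p : 0 < c2 := by rw [hc2]; positivity
  have hc3p : 0 < c3 := by rw [hc3]; positivity
  have hc4p : 0 < c4 := by rw [hc4]; positivity
  set Qp : ℝ → ℝ := fun t => c1 * t ^ (1+r) + c2 * t ^ (1+s) with hQp
  set P : ℝ → ℝ := fun t => c3 * t ^ (γ-1+r) + c4 * t ^ (γ-1+s) with hP
  set R : ℝ → ℝ := fun t => P t / Qp t with hR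
  have hQppos : ∀ t : ℝ, 0 < t → 0 < Qp t := by intro t ht; simp only [hQp]; positivity
  have hPpos : ∀ t : ℝ, 0 < t → 0 < P t := by intro t ht; simp only [hP]; positivity
  have hdenpos : ∀ t : ℝ, 0 < t → 0 < c * t ^ r + d * t ^ s := by intro t ht; positivity
  -- derivative of F
  have hFderiv : ∀ t : ℝ, 0 < t →
      HasDerivAt F ((Qp t - P t) / (c * t ^ r + d * t ^ s)^2) t := by
    intro t ht
    have htne := ht.ne'
    have h2 : HasDerivAt (fun t : ℝ => a * t ^ (2:ℝ) - b * t ^ γ)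
        (a * ((2:ℝ) * t ^ ((2:ℝ)-1)) - b * (γ * t ^ (γ-1))) t :=
      ((Real.hasDerivAt_rpow_const (Or.inl htne)).const_mul a).sub
        ((Real.hasDerivAt_rpow_const (Or.inl htne)).const_mul b)
    have h3 : HasDerivAt (fun t : ℝ => c * t ^ r + d * t ^ s)
        (c * (r * t ^ (r-1)) + d * (s * t ^ (s-1))) t :=
      ((Real.hasDerivAt_rpow_const (Or.inl htne)).const_mul c).add
        ((Real.hasDerivAt_rpow_const (Or.inl htne)).const_mul d)
    have h4 := h2.div h3 (hdenpos t ht).ne'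
    refine HasDerivAt.congr_deriv h4 ?_
    symm
    have e2 : t ^ (2:ℝ) = t * t := by
      rw [show (2:ℝ) = ((2:ℕ):ℝ) by norm_num, Real.rpow_natCast]; ring
    simp only [hQp, hP, hc1, hc2, hc3, hc4, e2]
    simp only [Real.rpow_add ht, Real.rpow_sub ht, Real.rpow_one]
    have hune : t ^ r ≠ 0 := by positivity
    have hvne : t ^ s ≠ 0 := by positivity
    have hzne : t ^ γ ≠ 0 := by positivity
    field_simp
    simp only [e2]
    ring
  -- derivative of R
  set RD : ℝ → ℝ := fun t =>
      ((c3 * ((γ-1+r) * t ^ (γ-1+r-1)) + c4 * ((γ-1+s) * t ^ (γ-1+s-1))) * Qp t -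
        P t * (c1 * ((1+r) * t ^ (1+r-1)) + c2 * ((1+s) * t ^ (1+s-1)))) / Qp t ^ 2
    with hRD
  have hRderiv : ∀ t : ℝ, 0 < t → HasDerivAt R (RD t) t := by
    intro t ht
    have htne := ht.ne'
    have h2 : HasDerivAt P
        (c3 * ((γ-1+r) * t ^ (γ-1+r-1)) + c4 * ((γ-1+s) * t ^ (γ-1+s-1))) t :=
      ((Real.hasDerivAt_rpow_const (Or.inl htne)).const_mul c3).add
        ((Real.hasDerivAt_rpow_const (Or.inl htne)).const_mul c4)
    have h3 : HasDerivAt Qp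
        (c1 * ((1+r) * t ^ (1+r-1)) + c2 * ((1+s) * t ^ (1+s-1))) t :=
      ((Real.hasDerivAt_rpow_const (Or.inl htne)).const_mul c1).add
        ((Real.hasDerivAt_rpow_const (Or.inl htne)).const_mul c2)
    exact h2.div h3 (hQppos t ht).ne'
  have hMid : 0 < c2*c3*(γ-2+r-s) + c1*c4*(γ-2+s-r) := by
    have hkey : c2*c3*(γ-2+r-s) + c1*c4*(γ-2+s-r)
        = a*b*c*d*((γ-2)*((2-s)*(γ-r)+(2-r)*(γ-s)+(r-s)^2)) := by
      simp only [hc1, hc2, hc3, hc4]; ring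
    rw [hkey]
    have h1 : 0 < (2-s)*(γ-r)+(2-r)*(γ-s)+(r-s)^2 := by nlinarith
    have h2 : (0:ℝ) < γ - 2 := by linarith
    positivity
  have hRDpos : ∀ t : ℝ, 0 < t → 0 < RD t := by
    intro t ht
    have htne := ht.ne'
    have hnum : ((c3 * ((γ-1+r) * t ^ (γ-1+r-1)) + c4 * ((γ-1+s) * t ^ (γ-1+s-1))) * Qp t -
        P t * (c1 * ((1+r) * t ^ (1+r-1)) + c2 * ((1+s) * t ^ (1+s-1))))
        = (t ^ γ / t) * (c1*c3*(γ-2)*(t^r)^2 +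
            (c2*c3*(γ-2+r-s) + c1*c4*(γ-2+s-r)) * (t^r*t^s) + c2*c4*(γ-2)*(t^s)^2) := by
      simp only [hQp, hP]
      simp only [Real.rpow_add ht, Real.rpow_sub ht, Real.rpow_one]
      have hune : t ^ r ≠ 0 := by positivity
      have hvne : t ^ s ≠ 0 := by positivity
      have hzne : t ^ γ ≠ 0 := by positivity
      field_simp
      ring
    rw [hRD]
    simp only []
    rw [hnum]
    have h2 : (0:ℝ) < γ - 2 := by linarith
    have hu : (0:ℝ) < t ^ r := by positivity
    have hv : (0:ℝ) < t ^ s := by positivity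
    have hz : (0:ℝ) < t ^ γ := by positivity
    have hq := hQppos t ht
    positivity
  have hRmono : StrictMonoOn R (Ioi 0) := by
    apply strictMonoOn_of_deriv_pos (convex_Ioi 0)
    · intro t ht
      exact (hRderiv t ht).differentiableAt.continuousAt.continuousWithinAt
    · intro t ht
      rw [interior_Ioi] at ht
      rw [(hRderiv t ht).deriv]
      exact hRDpos t ht
  have hg2 : (0:ℝ) < γ - 2 := by linarith
  have hdecomp : ∀ t : ℝ, 0 < t → P t = t ^ (γ-2) * (c3 * t ^ (1+r) + c4 * t ^ (1+s)) := by
    intro t ht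
    simp only [hP]
    rw [show γ-1+r = (γ-2)+(1+r) by ring, show γ-1+s = (γ-2)+(1+s) by ring,
      Real.rpow_add ht (γ-2) (1+r), Real.rpow_add ht (γ-2) (1+s)]
    ring
  obtain ⟨M0, hM0, hle1, hle2⟩ : ∃ M0 : ℝ, 0 < M0 ∧ c3 ≤ M0 * c1 ∧ c4 ≤ M0 * c2 := by
    refine ⟨max (c3/c1) (c4/c2), lt_of_lt_of_le (div_pos hc3p hc1p) (le_max_left _ _), ?_, ?_⟩
    · have h := le_max_left (c3/c1) (c4/c2)
      rw [div_le_iff₀ hc1p] at h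
      linarith
    · have h := le_max_right (c3/c1) (c4/c2)
      rw [div_le_iff₀ hc2p] at h
      linarith
  obtain ⟨m0, hm0, hge1, hge2⟩ : ∃ m0 : ℝ, 0 < m0 ∧ m0 * c1 ≤ c3 ∧ m0 * c2 ≤ c4 := by
    refine ⟨min (c3/c1) (c4/c2), lt_min (div_pos hc3p hc1p) (div_pos hc4p hc2p), ?_, ?_⟩
    · have h := min_le_left (c3/c1) (c4/c2)
      rw [le_div_iff₀ hc1p] at h
      linarith
    · have h := min_le_right (c3/c1) (c4/c2)
      rw [le_div_iff₀ hc2p] at h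
      linarith
  have hRub : ∀ t : ℝ, 0 < t → R t ≤ M0 * t ^ (γ-2) := by
    intro t ht
    have hu : (0:ℝ) < t ^ (1+r) := by positivity
    have hv : (0:ℝ) < t ^ (1+s) := by positivity
    have hz : (0:ℝ) < t ^ (γ-2) := by positivity
    have key : c3 * t ^ (1+r) + c4 * t ^ (1+s) ≤ M0 * (c1 * t ^ (1+r) + c2 * t ^ (1+s)) := by
      have A := mul_le_mul_of_nonneg_right hle1 hu.le
      have B := mul_le_mul_of_nonneg_right hle2 hv.le
      calc c3 * t ^ (1+r) + c4 * t ^ (1+s) ≤ M0 * c1 * t ^ (1+r) + M0 * c2 * t ^ (1+s) :=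
            add_le_add A B
        _ = M0 * (c1 * t ^ (1+r) + c2 * t ^ (1+s)) := by ring
    simp only [hR]
    rw [div_le_iff₀ (hQppos t ht), hdecomp t ht]
    simp only [hQp]
    calc t ^ (γ-2) * (c3 * t ^ (1+r) + c4 * t ^ (1+s))
        ≤ t ^ (γ-2) * (M0 * (c1 * t ^ (1+r) + c2 * t ^ (1+s))) :=
          mul_le_mul_of_nonneg_left key hz.le
      _ = M0 * t ^ (γ-2) * (c1 * t ^ (1+r) + c2 * t ^ (1+s)) := by ring
  have hRlb : ∀ t : ℝ, 0 < t → m0 * t ^ (γ-2) ≤ R t := by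
    intro t ht
    have hu : (0:ℝ) < t ^ (1+r) := by positivity
    have hv : (0:ℝ) < t ^ (1+s) := by positivity
    have hz : (0:ℝ) < t ^ (γ-2) := by positivity
    have key : m0 * (c1 * t ^ (1+r) + c2 * t ^ (1+s)) ≤ c3 * t ^ (1+r) + c4 * t ^ (1+s) := by
      have A := mul_le_mul_of_nonneg_right hge1 hu.le
      have B := mul_le_mul_of_nonneg_right hge2 hv.le
      calc m0 * (c1 * t ^ (1+r) + c2 * t ^ (1+s)) = m0 * c1 * t ^ (1+r) + m0 * c2 * t ^ (1+s) := by ring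
        _ ≤ c3 * t ^ (1+r) + c4 * t ^ (1+s) := add_le_add A B
    simp only [hR]
    rw [le_div_iff₀ (hQppos t ht), hdecomp t ht]
    simp only [hQp]
    calc m0 * t ^ (γ-2) * (c1 * t ^ (1+r) + c2 * t ^ (1+s))
        = t ^ (γ-2) * (m0 * (c1 * t ^ (1+r) + c2 * t ^ (1+s))) := by ring
      _ ≤ t ^ (γ-2) * (c3 * t ^ (1+r) + c4 * t ^ (1+s)) :=
          mul_le_mul_of_nonneg_left key hz.le
  -- endpoints for IVT
  obtain ⟨t1, ht1pos, hRt1⟩ : ∃ t1 : ℝ, 0 < t1 ∧ R t1 < 1 := by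
    set X1 : ℝ := (1/(2*M0)) ^ ((γ-2)⁻¹) with hX1
    have hX1pos : 0 < X1 := by rw [hX1]; positivity
    refine ⟨min 1 X1, lt_min one_pos hX1pos, ?_⟩
    have htpos : 0 < min 1 X1 := lt_min one_pos hX1pos
    have hXpow : X1 ^ (γ-2) = 1/(2*M0) := by
      rw [hX1, ← Real.rpow_mul (by positivity), inv_mul_cancel₀ hg2.ne', Real.rpow_one]
    have hle : (min 1 X1) ^ (γ-2) ≤ X1 ^ (γ-2) :=
      Real.rpow_le_rpow htpos.le (min_le_right _ _) hg2.le
    have := hRub _ htpos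
    have : R (min 1 X1) ≤ M0 * (1/(2*M0)) := by
      calc R (min 1 X1) ≤ M0 * (min 1 X1) ^ (γ-2) := this
        _ ≤ M0 * X1 ^ (γ-2) := mul_le_mul_of_nonneg_left hle hM0.le
        _ = M0 * (1/(2*M0)) := by rw [hXpow]
    have hhalf : M0 * (1/(2*M0)) = 1/2 := by field_simp
    rw [hhalf] at this
    linarith
  obtain ⟨t2, ht2pos, hRt2⟩ : ∃ t2 : ℝ, 1 ≤ t2 ∧ 1 < R t2 := by
    set X2 : ℝ := (2/m0) ^ ((γ-2)⁻¹) with hX2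
    have hX2pos : 0 < X2 := by rw [hX2]; positivity
    refine ⟨max 1 X2, le_max_left _ _, ?_⟩
    have htpos : 0 < max 1 X2 := lt_of_lt_of_le one_pos (le_max_left _ _)
    have hXpow : X2 ^ (γ-2) = 2/m0 := by
      rw [hX2, ← Real.rpow_mul (by positivity), inv_mul_cancel₀ hg2.ne', Real.rpow_one]
    have hle : X2 ^ (γ-2) ≤ (max 1 X2) ^ (γ-2) :=
      Real.rpow_le_rpow hX2pos.le (le_max_right _ _) hg2.le
    have h1 := hRlb _ htpos
    have h2 : m0 * (2/m0) ≤ R (max 1 X2) := by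
      calc m0 * (2/m0) = m0 * X2 ^ (γ-2) := by rw [hXpow]
        _ ≤ m0 * (max 1 X2) ^ (γ-2) := mul_le_mul_of_nonneg_left hle hm0.le
        _ ≤ R (max 1 X2) := h1
    have htwo : m0 * (2/m0) = 2 := by field_simp
    rw [htwo] at h2
    linarith
  have ht1pos' : (0:ℝ) < t1 := ht1pos
  have ht2pos' : (0:ℝ) < t2 := lt_of_lt_of_le one_pos ht2pos
  have ht12 : t1 ≤ t2 := by
    by_contra hcon
    push_neg at hcon
    have := hRmono (mem_Ioi.2 ht2pos') (mem_Ioi.2 ht1pos') hcon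
    linarith
  have hcontR : ContinuousOn R (Icc t1 t2) := by
    intro x hx
    have hx0 : 0 < x := lt_of_lt_of_le ht1pos hx.1
    exact (hRderiv x hx0).differentiableAt.continuousAt.continuousWithinAt
  obtain ⟨tn, htnmem, hRtn⟩ := intermediate_value_Icc ht12 hcontR ⟨hRt1.le, hRt2.le⟩
  have htnpos : 0 < tn := lt_of_lt_of_le ht1pos htnmem.1
  -- sign of numerator via R
  have hsign : ∀ t : ℝ, 0 < t → Qp t - P t = Qp t * (1 - R t) := by
    intro t ht
    simp only [hR]
    have hQ := (hQppos t ht).ne'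
    field_simp
  have hFd : ∀ t : ℝ, 0 < t →
      deriv F t = (Qp t - P t) / (c * t ^ r + d * t ^ s)^2 := fun t ht => (hFderiv t ht).deriv
  have hderivtn : deriv F tn = 0 := by
    rw [hFd tn htnpos, hsign tn htnpos, hRtn]
    simp
  refine ⟨tn, htnpos, hderivtn, ?_, ?_⟩
  · -- uniqueness
    intro t ht hdt
    rw [hFd t ht, div_eq_zero_iff] at hdt
    have hden2 : (c * t ^ r + d * t ^ s)^2 ≠ 0 := by positivity
    rcases hdt with hnum | habs
    · rw [hsign t ht] at hnum
      have hQ := (hQppos t ht).ne'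
      have hR1 : R t = 1 := by
        rcases mul_eq_zero.1 hnum with h | h
        · exact absurd h hQ
        · exact (sub_eq_zero.mp h).symm
      exact hRmono.injOn (mem_Ioi.2 ht) (mem_Ioi.2 htnpos) (by rw [hR1, hRtn])
    · exact absurd habs hden2
  · -- global max
    intro t ht
    rcases lt_trichotomy t tn with hlt | rfl | hgt
    · have hmono : StrictMonoOn F (Ioc 0 tn) := by
        apply strictMonoOn_of_deriv_pos (convex_Ioc 0 tn)
        · intro x hx
          exact (hFderiv x hx.1).differentiableAt.continuousAt.continuousWithinAt
        · intro x hx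
          rw [interior_Ioc] at hx
          rw [hFd x hx.1]
          apply div_pos
          · rw [hsign x hx.1]
            apply mul_pos (hQppos x hx.1)
            have hRx : R x < R tn := hRmono (mem_Ioi.2 hx.1) (mem_Ioi.2 htnpos) hx.2
            rw [hRtn] at hRx
            exact sub_pos.mpr hRx
          · have := hdenpos x hx.1
            positivity
      exact (hmono ⟨ht, hlt.le⟩ ⟨htnpos, le_refl tn⟩ hlt).le
    · exact le_refl _
    · have hanti : StrictAntiOn F (Ici tn) := by
        apply strictAntiOn_of_deriv_neg (convex_Ici tn)
        · intro x hx
          have hx0 : 0 < x := lt_of_lt_of_le htnpos hx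
          exact (hFderiv x hx0).differentiableAt.continuousAt.continuousWithinAt
        · intro x hx
          rw [interior_Ici] at hx
          have hx0 : 0 < x := lt_trans htnpos hx
          rw [hFd x hx0]
          apply div_neg_of_neg_of_pos
          · rw [hsign x hx0]
            have hRx : R tn < R x := hRmono (mem_Ioi.2 htnpos) (mem_Ioi.2 hx0) hx
            rw [hRtn] at hRx
            exact mul_neg_of_pos_of_neg (hQppos x hx0) (sub_neg.mpr hRx)
          · have := hdenpos x hx0
            positivity
      exact (hanti (le_refl tn) hgt.le hgt).le

/-- Each of the fiber maps `Q_n` and `Q_e` has a unique critical point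
on `(0, ∞)`, which is moreover a global maximum point. -/
theorem stmt_1 (A B C D θ p q α β : ℝ)
    (hA : 0 < A) (hB : 0 < B) (hC : 0 < C) (hD : 0 < D) (hθ : 0 < θ)
    (hp : 0 < p) (hpq : p ≤ q) (hq : q < 1) (hα : 1 < α) (hβ : 1 < β)
    (hαβ : 2 < α + β)
    (Qn Qe : ℝ → ℝ)
    (hQn : Qn = fun t : ℝ =>
      (A * t ^ (2 : ℝ) - θ * B * t ^ (α + β)) /
        (C * t ^ (1 - p) + D * t ^ (1 - q)))
    (hQe : Qe = fun t : ℝ =>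
      ((1 / 2) * A * t ^ (2 : ℝ) - (θ / (α + β)) * B * t ^ (α + β)) /
        ((1 / (1 - p)) * C * t ^ (1 - p) + (1 / (1 - q)) * D * t ^ (1 - q))) :
    (∃ tn : ℝ, 0 < tn ∧ deriv Qn tn = 0 ∧
      (∀ t : ℝ, 0 < t → deriv Qn t = 0 → t = tn) ∧
      (∀ t : ℝ, 0 < t → Qn t ≤ Qn tn)) ∧
    (∃ te : ℝ, 0 < te ∧ deriv Qe te = 0 ∧
      (∀ t : ℝ, 0 < t → deriv Qe t = 0 → t = te) ∧
      (∀ t : ℝ, 0 < t → Qe t ≤ Qe te)) := by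
  subst hQn hQe
  have h1p : (0:ℝ) < 1 - p := by linarith
  have h1q : (0:ℝ) < 1 - q := by linarith
  constructor
  · obtain ⟨tn, h1, h2, h3, h4⟩ := fiber_max A (θ * B) C D (1 - p) (1 - q) (α + β)
      hA (by positivity) hC hD h1q (by linarith) (by linarith) hαβ
    exact ⟨tn, h1, h2, h3, h4⟩
  · obtain ⟨te, h1, h2, h3, h4⟩ := fiber_max (1 / 2 * A) (θ / (α + β) * B)
      (1 / (1 - p) * C) (1 / (1 - q) * D) (1 - p) (1 - q) (α + β)
      (by positivity) (by positivity) (by positivity) (by positivity)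
      h1q (by linarith) (by linarith) hαβ
    exact ⟨te, h1, h2, h3, h4⟩
end

section
/- Assume in addition p = q. Then sup_{t>0} Q_n(t) = C_{α,β,p,θ} · A^{(α+β−1+p)/(α+β−2)} / (B^{(1+p)/(α+β−2)} (C + D)), where C_{α,β,p,θ} = (1+p)^{(1+p)/(α+β−2)} (α+β−2) / (θ^{(1+p)/(α+β−2)} (α+β−1+p)^{(α+β−1+p)/(α+β−2)}). -/
open Real Set

/-- AM-GM core: for `0<r<s`, `a t^r - b t^s ≤ M` for all `t>0`, with equality at `t0`. -/
lemma amgm_key (a b r s : ℝ) (ha : 0 < a) (hb : 0 < b) (hr : 0 < r) (hrs : r < s)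
    (t : ℝ) (ht : 0 < t) :
    a * t ^ r - b * t ^ s ≤
      a * ((s - r) / s) * ((a * r / (b * s)) ^ (1 / (s - r))) ^ r := by
  have hs : 0 < s := hr.trans hrs
  have he : 0 < s - r := by linarith
  set K := a * r / (b * s) with hK
  have hKpos : 0 < K := by positivity
  set t0 : ℝ := K ^ (1 / (s - r)) with ht0def
  have ht0 : 0 < t0 := rpow_pos_of_pos hKpos _
  have ht0e : t0 ^ (s - r) = K := by
    rw [ht0def, ← Real.rpow_mul hKpos.le, one_div_mul_cancel he.ne', rpow_one]
  -- geometric mean inequality with x = t^s, x0 = t0^s, weights r/s, 1-r/s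
  have hgm := Real.geom_mean_le_arith_mean2_weighted (w₁ := r / s) (w₂ := 1 - r / s)
    (p₁ := t ^ s) (p₂ := t0 ^ s) (by positivity)
    (by rw [sub_nonneg]; exact (div_le_one hs).2 hrs.le)
    (rpow_pos_of_pos ht s).le (rpow_pos_of_pos ht0 s).le (by ring)
  have h1 : (t ^ s) ^ (r / s) = t ^ r := by
    rw [← Real.rpow_mul ht.le, mul_div_cancel₀ _ hs.ne']
  have h2 : (t0 ^ s) ^ (1 - r / s) = t0 ^ (s - r) := by
    rw [← Real.rpow_mul ht0.le]
    congr 1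
    field_simp
  rw [h1, h2, ht0e] at hgm
  -- multiply by a / K
  have hmul := mul_le_mul_of_nonneg_left hgm (by positivity : (0:ℝ) ≤ a / K)
  have hb' : a / K * (r / s) = b := by
    rw [hK]; field_simp
  have ht0s : t0 ^ s = t0 ^ r * K := by
    rw [← ht0e, ← Real.rpow_add ht0]; ring_nf
  have hM : a / K * ((1 - r / s) * (t0 ^ s)) = a * ((s - r) / s) * t0 ^ r := by
    rw [ht0s]; field_simp
  calc a * t ^ r - b * t ^ s
      = a / K * (t ^ r * K) - b * t ^ s := by field_simp
    _ ≤ a / K * (r / s * t ^ s + (1 - r / s) * t0 ^ s) - b * t ^ s := by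
        nlinarith [hmul, hKpos, ha]
    _ = a * ((s - r) / s) * t0 ^ r := by
        rw [mul_add, hM]
        have : a / K * (r / s * t ^ s) = b * t ^ s := by
          rw [← hb']; ring
        rw [this]; ring

lemma amgm_eq (a b r s : ℝ) (ha : 0 < a) (hb : 0 < b) (hr : 0 < r) (hrs : r < s) :
    a * ((a * r / (b * s)) ^ (1 / (s - r))) ^ r
      - b * ((a * r / (b * s)) ^ (1 / (s - r))) ^ s =
      a * ((s - r) / s) * ((a * r / (b * s)) ^ (1 / (s - r))) ^ r := by
  have hs : 0 < s := hr.trans hrs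
  have he : 0 < s - r := by linarith
  set K := a * r / (b * s) with hK
  have hKpos : 0 < K := by positivity
  set t0 : ℝ := K ^ (1 / (s - r)) with ht0def
  have ht0 : 0 < t0 := rpow_pos_of_pos hKpos _
  have ht0e : t0 ^ (s - r) = K := by
    rw [ht0def, ← Real.rpow_mul hKpos.le, one_div_mul_cancel he.ne', rpow_one]
  have ht0s : t0 ^ s = t0 ^ r * K := by
    rw [← ht0e, ← Real.rpow_add ht0]; ring_nf
  rw [ht0s, hK]
  field_simp

lemma sup_formula (a b C' r s : ℝ) (ha : 0 < a) (hb : 0 < b) (hr : 0 < r)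
    (hrs : r < s) (hC' : 0 < C') :
    sSup ((fun t : ℝ => (a * t ^ r - b * t ^ s) / C') '' Set.Ioi 0) =
      a * ((s - r) / s) * ((a * r / (b * s)) ^ (1 / (s - r))) ^ r / C' := by
  have hs : 0 < s := hr.trans hrs
  apply IsGreatest.csSup_eq
  constructor
  · refine ⟨(a * r / (b * s)) ^ (1 / (s - r)), ?_, ?_⟩
    · have : (0:ℝ) < a * r / (b * s) := by positivity
      exact rpow_pos_of_pos this _
    · simp only
      rw [amgm_eq a b r s ha hb hr hrs]
  · rintro x ⟨t, ht, rfl⟩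
    simp only
    gcongr
    exact amgm_key a b r s ha hb hr hrs t ht

/-- If `p = q`, then `sup_{t>0} Q_n(t)` equals
`C_{α,β,p,θ} · A^{(α+β−1+p)/(α+β−2)} / (B^{(1+p)/(α+β−2)} (C + D))` with
`C_{α,β,p,θ} = (1+p)^{(1+p)/(α+β−2)} (α+β−2) / (θ^{(1+p)/(α+β−2)} (α+β−1+p)^{(α+β−1+p)/(α+β−2)})`. -/
theorem stmt_5 (A B C D θ p q α β : ℝ)
    (hA : 0 < A) (hB : 0 < B) (hC : 0 < C) (hD : 0 < D) (hθ : 0 < θ)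
    (hp : 0 < p) (hpq : p ≤ q) (hq : q < 1) (hα : 1 < α) (hβ : 1 < β)
    (hαβ : 2 < α + β) (hpeq : p = q)
    (Qn : ℝ → ℝ)
    (hQn : Qn = fun t : ℝ =>
      (A * t ^ (2 : ℝ) - θ * B * t ^ (α + β)) /
        (C * t ^ (1 - p) + D * t ^ (1 - q))) :
    sSup (Qn '' Set.Ioi (0 : ℝ)) =
      ((1 + p) ^ ((1 + p) / (α + β - 2)) * (α + β - 2) /
        (θ ^ ((1 + p) / (α + β - 2)) *
          (α + β - 1 + p) ^ ((α + β - 1 + p) / (α + β - 2)))) *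
      A ^ ((α + β - 1 + p) / (α + β - 2)) /
      (B ^ ((1 + p) / (α + β - 2)) * (C + D)) := by
  subst hpeq
  subst hQn
  have hCD : (0:ℝ) < C + D := by linarith
  have hr : (0:ℝ) < 1 + p := by linarith
  have hs : (0:ℝ) < α + β - 1 + p := by linarith
  have he : (0:ℝ) < α + β - 2 := by linarith
  -- rewrite the image
  have himg : (fun t : ℝ =>
      (A * t ^ (2 : ℝ) - θ * B * t ^ (α + β)) /
        (C * t ^ (1 - p) + D * t ^ (1 - p))) '' Set.Ioi 0 =
      (fun t : ℝ => (A * t ^ (1 + p) - (θ * B) * t ^ (α + β - 1 + p)) / (C + D)) ''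
        Set.Ioi 0 := by
    apply Set.image_congr
    intro t ht
    have ht : (0:ℝ) < t := ht
    have h2 : t ^ (2:ℝ) = t ^ (1 + p) * t ^ (1 - p) := by
      rw [← Real.rpow_add ht]; norm_num
    have h3 : t ^ (α + β) = t ^ (α + β - 1 + p) * t ^ (1 - p) := by
      rw [← Real.rpow_add ht]; ring_nf
    have htp : (0:ℝ) < t ^ (1 - p) := rpow_pos_of_pos ht _
    have hden : (0:ℝ) < C * t ^ (1 - p) + D * t ^ (1 - p) := by
      have := rpow_pos_of_pos ht (1 - p); nlinarith
    rw [h2, h3, div_eq_div_iff hden.ne' hCD.ne']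
    ring
  rw [himg, sup_formula A (θ * B) (C + D) (1 + p) (α + β - 1 + p) hA (by positivity)
    hr (by linarith) hCD]
  -- now the pure algebra
  have hsr : α + β - 1 + p - (1 + p) = α + β - 2 := by ring
  rw [hsr]
  set e := α + β - 2 with hedef
  set r := 1 + p with hrdef
  set s := α + β - 1 + p with hsdef
  have hX : (0:ℝ) < A * r / (θ * B * s) := by positivity
  have ht0r : ((A * r / (θ * B * s)) ^ (1 / e)) ^ r =
      (A ^ (r / e) * r ^ (r / e)) / (θ ^ (r / e) * B ^ (r / e) * s ^ (r / e)) := by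
    rw [← Real.rpow_mul hX.le, show 1 / e * r = r / e by ring,
      Real.div_rpow (by positivity) (by positivity),
      Real.mul_rpow hA.le hr.le, Real.mul_rpow (by positivity) hs.le,
      Real.mul_rpow hθ.le hB.le]
  have hse : s / e = 1 + r / e := by
    field_simp
    rw [hsdef, hrdef, hedef]; ring
  have hAs : A ^ (s / e) = A * A ^ (r / e) := by
    rw [hse, Real.rpow_add hA, Real.rpow_one]
  have hss : s ^ (s / e) = s * s ^ (r / e) := by
    rw [hse, Real.rpow_add hs, Real.rpow_one]
  rw [ht0r, hAs, hss]
  have h1 : (0:ℝ) < A ^ (r / e) := rpow_pos_of_pos hA _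
  have h2 : (0:ℝ) < r ^ (r / e) := rpow_pos_of_pos hr _
  have h3 : (0:ℝ) < θ ^ (r / e) := rpow_pos_of_pos hθ _
  have h4 : (0:ℝ) < B ^ (r / e) := rpow_pos_of_pos hB _
  have h5 : (0:ℝ) < s ^ (r / e) := rpow_pos_of_pos hs _
  field_simp
end

section
/- Assume in addition p = q. Then the unique t > 0 with Q_e'(t) = 0 is given explicitly by t = ((1+p)(α+β) A / (2 θ (α+β−1+p) B))^{1/(α+β−2)}. -/
set_option maxHeartbeats 1000000

/-- If `p = q`, the unique `t > 0` with `Q_e'(t) = 0` is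
`t = ((1+p)(α+β) A / (2 θ (α+β−1+p) B))^{1/(α+β−2)}`. -/
theorem stmt_6 (A B C D θ p q α β : ℝ)
    (hA : 0 < A) (hB : 0 < B) (hC : 0 < C) (hD : 0 < D) (hθ : 0 < θ)
    (hp : 0 < p) (hpq : p ≤ q) (hq : q < 1) (hα : 1 < α) (hβ : 1 < β)
    (hαβ : 2 < α + β) (hpeq : p = q)
    (Qe : ℝ → ℝ)
    (hQe : Qe = fun t : ℝ =>
      ((1 / 2) * A * t ^ (2 : ℝ) - (θ / (α + β)) * B * t ^ (α + β)) /
        ((1 / (1 - p)) * C * t ^ (1 - p) + (1 / (1 - q)) * D * t ^ (1 - q))) :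
    0 < ((1 + p) * (α + β) * A / (2 * θ * (α + β - 1 + p) * B)) ^ (1 / (α + β - 2)) ∧
    ∀ t : ℝ, 0 < t →
      (deriv Qe t = 0 ↔
        t = ((1 + p) * (α + β) * A / (2 * θ * (α + β - 1 + p) * B)) ^ (1 / (α + β - 2))) := by
  subst hpeq
  have he : (0:ℝ) < α + β := by linarith
  have he0 : (α + β) ≠ 0 := ne_of_gt he
  have hp1 : (0:ℝ) < 1 - p := by linarith
  have hp1' : (1 - p) ≠ 0 := ne_of_gt hp1
  have he1 : (0:ℝ) < α + β - 1 + p := by linarith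
  have he2 : (α + β - 2) ≠ 0 := by intro h; linarith [sub_eq_zero.mp h]
  have hden : (2 * θ * (α + β - 1 + p) * B) ≠ 0 :=
    ne_of_gt (mul_pos (mul_pos (mul_pos (by norm_num) hθ) he1) hB)
  have hRpos : (0:ℝ) < (1 + p) * (α + β) * A / (2 * θ * (α + β - 1 + p) * B) := by
    apply div_pos
    · exact mul_pos (mul_pos (by linarith) he) hA
    · exact mul_pos (mul_pos (mul_pos (by norm_num) hθ) he1) hB
  refine ⟨Real.rpow_pos_of_pos hRpos _, ?_⟩
  intro t ht
  -- derivative of numerator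
  have hN : HasDerivAt (fun t : ℝ => (1 / 2) * A * t ^ (2 : ℝ) - (θ / (α + β)) * B * t ^ (α + β))
      (A * t - θ * B * t ^ (α + β - 1)) t := by
    have h2 : HasDerivAt (fun x : ℝ => x ^ (2 : ℝ)) (2 * t ^ ((2:ℝ) - 1)) t :=
      Real.hasDerivAt_rpow_const (Or.inl ht.ne')
    have he' : HasDerivAt (fun x : ℝ => x ^ (α + β)) ((α + β) * t ^ (α + β - 1)) t :=
      Real.hasDerivAt_rpow_const (Or.inl ht.ne')
    have := ((h2.const_mul ((1/2) * A)).sub (he'.const_mul ((θ / (α + β)) * B)))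
    refine this.congr_deriv ?_
    rw [show (2:ℝ) - 1 = 1 by norm_num, Real.rpow_one]
    field_simp
  -- derivative of denominator
  have hM : HasDerivAt (fun t : ℝ => (1 / (1 - p)) * C * t ^ (1 - p) + (1 / (1 - p)) * D * t ^ (1 - p))
      ((C + D) * t ^ (-p)) t := by
    have h1 : HasDerivAt (fun x : ℝ => x ^ (1 - p)) ((1 - p) * t ^ ((1 - p) - 1)) t :=
      Real.hasDerivAt_rpow_const (Or.inl ht.ne')
    have := ((h1.const_mul ((1 / (1 - p)) * C)).add (h1.const_mul ((1 / (1 - p)) * D)))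
    refine this.congr_deriv ?_
    rw [show (1 - p) - 1 = -p by ring]
    field_simp
  have hMt : (0:ℝ) < (1 / (1 - p)) * C * t ^ (1 - p) + (1 / (1 - p)) * D * t ^ (1 - p) := by
    have := Real.rpow_pos_of_pos ht (1 - p)
    positivity
  have hQ : HasDerivAt Qe
      (((A * t - θ * B * t ^ (α + β - 1)) *
          ((1 / (1 - p)) * C * t ^ (1 - p) + (1 / (1 - p)) * D * t ^ (1 - p)) -
        ((1 / 2) * A * t ^ (2 : ℝ) - (θ / (α + β)) * B * t ^ (α + β)) *
          ((C + D) * t ^ (-p))) /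
        ((1 / (1 - p)) * C * t ^ (1 - p) + (1 / (1 - p)) * D * t ^ (1 - p)) ^ 2) t := by
    rw [hQe]
    exact hN.div hM hMt.ne'
  rw [hQ.deriv]
  -- rpow product simplifications
  have h1 : t * t ^ (1 - p) = t ^ (2 - p) := by
    rw [show (2 - p : ℝ) = 1 + (1 - p) by ring, Real.rpow_add ht, Real.rpow_one]
  have h2 : t ^ (α + β - 1) * t ^ (1 - p) = t ^ (α + β - p) := by
    rw [← Real.rpow_add ht]; ring_nf
  have h3 : t ^ (2:ℝ) * t ^ (-p) = t ^ (2 - p) := by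
    rw [← Real.rpow_add ht]; ring_nf
  have h4 : t ^ (α + β) * t ^ (-p) = t ^ (α + β - p) := by
    rw [← Real.rpow_add ht]; ring_nf
  have hX : (0:ℝ) < t ^ (2 - p) := Real.rpow_pos_of_pos ht _
  have hfac : ((A * t - θ * B * t ^ (α + β - 1)) *
          ((1 / (1 - p)) * C * t ^ (1 - p) + (1 / (1 - p)) * D * t ^ (1 - p)) -
        ((1 / 2) * A * t ^ (2 : ℝ) - (θ / (α + β)) * B * t ^ (α + β)) *
          ((C + D) * t ^ (-p)))
      = ((C + D) / (1 - p)) *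
        (A * (1 + p) / 2 * t ^ (2 - p) - θ * B * (α + β - 1 + p) / (α + β) * t ^ (α + β - p)) := by
    have key : ((A * t - θ * B * t ^ (α + β - 1)) *
          ((1 / (1 - p)) * C * t ^ (1 - p) + (1 / (1 - p)) * D * t ^ (1 - p)) -
        ((1 / 2) * A * t ^ (2 : ℝ) - (θ / (α + β)) * B * t ^ (α + β)) *
          ((C + D) * t ^ (-p)))
        = (C + D) * ((A * (t * t ^ (1 - p)) - θ * B * (t ^ (α + β - 1) * t ^ (1 - p))) / (1 - p)
            - ((1 / 2) * A * (t ^ (2:ℝ) * t ^ (-p)) - (θ / (α + β)) * B * (t ^ (α + β) * t ^ (-p)))) := by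
      field_simp
    rw [key, h1, h2, h3, h4]
    field_simp
    try ring
    try tauto
  rw [hfac]
  have hCD : (0:ℝ) < (C + D) / (1 - p) := by positivity
  have hsq : ((1 / (1 - p)) * C * t ^ (1 - p) + (1 / (1 - p)) * D * t ^ (1 - p)) ^ 2 ≠ 0 :=
    pow_ne_zero _ hMt.ne'
  have h5 : t ^ (α + β - p) = t ^ (α + β - 2) * t ^ (2 - p) := by
    rw [← Real.rpow_add ht]; ring_nf
  rw [div_eq_zero_iff]
  constructor
  · rintro (h | h)
    · have h' : A * (1 + p) / 2 * t ^ (2 - p) -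
          θ * B * (α + β - 1 + p) / (α + β) * t ^ (α + β - p) = 0 := by
        rcases mul_eq_zero.mp h with h | h
        · exact absurd h hCD.ne'
        · exact h
      rw [h5] at h'
      have hy : A * (1 + p) / 2 = θ * B * (α + β - 1 + p) / (α + β) * t ^ (α + β - 2) := by
        apply mul_right_cancel₀ hX.ne'
        have := sub_eq_zero.mp h'
        rw [this]; ring
      have heq : t ^ (α + β - 2) = (1 + p) * (α + β) * A / (2 * θ * (α + β - 1 + p) * B) := by
        rw [eq_div_iff hden]
        field_simp at hy
        linarith [hy]
      rw [← heq, one_div, Real.rpow_rpow_inv ht.le he2]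
    · exact absurd h hsq
  · intro h
    left
    have heq : t ^ (α + β - 2) = (1 + p) * (α + β) * A / (2 * θ * (α + β - 1 + p) * B) := by
      rw [h, one_div, Real.rpow_inv_rpow hRpos.le he2]
    rw [h5, heq]
    field_simp
    ring
end

section
/- Assume in addition p = q. Then sup_{t>0} Q_e(t) = C̃_{α,β,p,θ} · A^{(α+β−1+p)/(α+β−2)} / (B^{(1+p)/(α+β−2)} (C + D)), where C̃_{α,β,p,θ} = (1−p)(α+β−2) ((1+p)(α+β)/θ)^{(1+p)/(α+β−2)} (1/(2(α+β−1+p)))^{(α+β−1+p)/(α+β−2)}. -/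
private lemma bern_aux (y k : ℝ) (hy : 0 < y) (hk : 1 ≤ k) :
    y - y ^ k / k ≤ 1 - 1 / k := by
  have hk0 : 0 < k := by linarith
  have hb := one_add_mul_self_le_rpow_one_add (by linarith : (-1:ℝ) ≤ y - 1) hk
  rw [show (1:ℝ) + (y - 1) = y by ring] at hb
  have h2 : y - 1 ≤ (y ^ k - 1) / k := (le_div_iff₀ hk0).mpr (by linarith)
  rw [sub_div] at h2
  linarith

set_option maxHeartbeats 1000000 in
/-- If `p = q`, then `sup_{t>0} Q_e(t)` equals
`C̃_{α,β,p,θ} · A^{(α+β−1+p)/(α+β−2)} / (B^{(1+p)/(α+β−2)} (C + D))` with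
`C̃_{α,β,p,θ} = (1−p)(α+β−2) ((1+p)(α+β)/θ)^{(1+p)/(α+β−2)} (1/(2(α+β−1+p)))^{(α+β−1+p)/(α+β−2)}`. -/
theorem stmt_7 (A B C D θ p q α β : ℝ)
    (hA : 0 < A) (hB : 0 < B) (hC : 0 < C) (hD : 0 < D) (hθ : 0 < θ)
    (hp : 0 < p) (hpq : p ≤ q) (hq : q < 1) (hα : 1 < α) (hβ : 1 < β)
    (hαβ : 2 < α + β) (hpeq : p = q)
    (Qe : ℝ → ℝ)
    (hQe : Qe = fun t : ℝ =>
      ((1 / 2) * A * t ^ (2 : ℝ) - (θ / (α + β)) * B * t ^ (α + β)) /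
        ((1 / (1 - p)) * C * t ^ (1 - p) + (1 / (1 - q)) * D * t ^ (1 - q))) :
    sSup (Qe '' Set.Ioi (0 : ℝ)) =
      ((1 - p) * (α + β - 2) * ((1 + p) * (α + β) / θ) ^ ((1 + p) / (α + β - 2)) *
        (1 / (2 * (α + β - 1 + p))) ^ ((α + β - 1 + p) / (α + β - 2))) *
      A ^ ((α + β - 1 + p) / (α + β - 2)) /
      (B ^ ((1 + p) / (α + β - 2)) * (C + D)) := by
  subst hpeq
  have hp1 : p < 1 := hq
  set s : ℝ := α + β - 1 + p with hs_def
  set d : ℝ := α + β - 2 with hd_def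
  set e : ℝ := (1 + p) / d with he_def
  have hd : 0 < d := by rw [hd_def]; linarith
  have hr : (0:ℝ) < 1 + p := by linarith
  have hs : 0 < s := by rw [hs_def]; linarith
  have hrs : 1 + p < s := by rw [hs_def]; linarith
  have hsd : s - (1 + p) = d := by rw [hs_def, hd_def]; ring
  have hαβ0 : 0 < α + β := by linarith
  set a : ℝ := A / 2 with ha_def
  set b : ℝ := θ * B / (α + β) with hb_def
  have ha : 0 < a := by rw [ha_def]; positivity
  have hb : 0 < b := by rw [hb_def]; positivity
  have hCD : 0 < C + D := by linarith
  set c : ℝ := (1 - p) / (C + D) with hc_def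
  have hc : 0 < c := by rw [hc_def]; exact div_pos (by linarith) hCD
  set K : ℝ := a * (1 + p) / (b * s) with hK_def
  have hK : 0 < K := by rw [hK_def]; positivity
  have hKe : (0:ℝ) < K ^ e := Real.rpow_pos_of_pos hK _
  have hbK : b * K = a * (1 + p) / s := by
    rw [hK_def]; field_simp
  -- Step 1: form of Qe on Ioi 0
  have hform : ∀ t : ℝ, 0 < t →
      Qe t = c * (a * t ^ (1 + p) - b * t ^ s) := by
    intro t ht
    rw [hQe]
    simp only
    have h2 : t ^ (2:ℝ) = t ^ (1 + p) * t ^ (1 - p) := by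
      rw [← Real.rpow_add ht]; norm_num
    have hab : t ^ (α + β) = t ^ s * t ^ (1 - p) := by
      rw [← Real.rpow_add ht, hs_def]; ring_nf
    have htp : (0:ℝ) < t ^ (1 - p) := Real.rpow_pos_of_pos ht _
    have h1p : (0:ℝ) < 1 - p := by linarith
    have hden : 1 / (1 - p) * C * t ^ (1 - p) + 1 / (1 - p) * D * t ^ (1 - p)
        = (C + D) / (1 - p) * t ^ (1 - p) := by
      field_simp [h1p.ne']
    rw [h2, hab, hden, div_eq_iff (mul_pos (div_pos hCD h1p) htp).ne']
    rw [hc_def, ha_def, hb_def]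
    field_simp [h1p.ne', hCD.ne', hαβ0.ne']
  -- critical point
  set tc : ℝ := K ^ (1 / d) with htc_def
  have htc : 0 < tc := Real.rpow_pos_of_pos hK _
  have htcr : tc ^ (1 + p) = K ^ e := by
    rw [htc_def, ← Real.rpow_mul hK.le]
    congr 1
    rw [he_def]; field_simp
  have htcs : tc ^ s = K ^ e * K := by
    rw [htc_def, ← Real.rpow_mul hK.le, ← Real.rpow_add_one hK.ne']
    congr 1
    rw [he_def]
    field_simp
    linarith [hsd]
  set M : ℝ := c * (a * d / s * K ^ e) with hM_def
  -- value at tc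
  have hval : Qe tc = M := by
    rw [hform tc htc, htcr, htcs, hM_def,
      show b * (K ^ e * K) = (b * K) * K ^ e by ring, hbK]
    have h1 : a * K ^ e - a * (1 + p) / s * K ^ e = a * d / s * K ^ e := by
      field_simp
      linear_combination (a * K ^ e) * hsd
    rw [h1]
  -- upper bound
  have hub : ∀ x ∈ Qe '' Set.Ioi (0:ℝ), x ≤ M := by
    rintro x ⟨t, ht, rfl⟩
    rw [Set.mem_Ioi] at ht
    rw [hform t ht, hM_def]
    apply mul_le_mul_of_nonneg_left _ hc.le
    set u : ℝ := t / tc with hu_def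
    have hu : 0 < u := by positivity
    set y : ℝ := u ^ (1 + p) with hy_def
    have hy : 0 < y := Real.rpow_pos_of_pos hu _
    set k : ℝ := s / (1 + p) with hk_def
    have hk : 1 ≤ k := by
      rw [hk_def, le_div_iff₀ hr]; linarith
    have hk0 : 0 < k := by linarith
    have htu : t = tc * u := by rw [hu_def]; field_simp
    have ht1 : t ^ (1 + p) = K ^ e * y := by
      rw [htu, Real.mul_rpow htc.le hu.le, htcr, hy_def]
    have hts : t ^ s = (K ^ e * K) * y ^ k := by
      rw [htu, Real.mul_rpow htc.le hu.le, htcs]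
      congr 1
      rw [hy_def, ← Real.rpow_mul hu.le]
      congr 1
      rw [hk_def]; field_simp
    have key := bern_aux y k hy hk
    have h1k : (1:ℝ) / k = (1 + p) / s := by
      rw [hk_def, one_div_div]
    have hds : 1 - (1 + p) / s = d / s := by
      field_simp [hs.ne']
      linarith [hsd]
    rw [div_eq_mul_one_div (y ^ k) k, h1k, hds] at key
    rw [ht1, hts, show b * ((K ^ e * K) * y ^ k) = (b * K) * (K ^ e * y ^ k) by ring, hbK]
    calc a * (K ^ e * y) - a * (1 + p) / s * (K ^ e * y ^ k)
        = (a * K ^ e) * (y - y ^ k * ((1 + p) / s)) := by ring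
      _ ≤ (a * K ^ e) * (d / s) := by
          apply mul_le_mul_of_nonneg_left key (mul_pos ha hKe).le
      _ = a * d / s * K ^ e := by ring
  -- sSup
  have hgt : IsGreatest (Qe '' Set.Ioi (0:ℝ)) M :=
    ⟨⟨tc, Set.mem_Ioi.mpr htc, hval⟩, hub⟩
  rw [hgt.csSup_eq]
  -- match constants
  have hKform : K = A * ((1 + p) * (α + β) / θ) * (1 / (2 * s)) / B := by
    rw [hK_def, ha_def, hb_def]
    field_simp
  have hX : (0:ℝ) ≤ (1 + p) * (α + β) / θ := by positivity
  have hKepow : K ^ e = A ^ e * ((1 + p) * (α + β) / θ) ^ e * (1 / (2 * s)) ^ e / B ^ e := by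
    rw [hKform, Real.div_rpow (by positivity) hB.le,
      Real.mul_rpow (by positivity) (by positivity),
      Real.mul_rpow hA.le hX]
  have hse : s / d = e + 1 := by
    rw [show s = (1 + p) + d by linarith [hsd], add_div, div_self hd.ne', he_def]
  rw [hse, Real.rpow_add_one hA.ne',
    Real.rpow_add_one (by positivity : (1:ℝ) / (2 * s) ≠ 0)]
  rw [hM_def, hKepow, hc_def, ha_def]
  have hBe : (0:ℝ) < B ^ e := Real.rpow_pos_of_pos hB _
  have h1p : (0:ℝ) < 1 - p := by linarith
  field_simp [hBe.ne', hCD.ne', hs.ne']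
end

section
/- For every t > 0 the following identity holds: Q_n(t) − Q_e(t) = (t/((1−p)(1−q))) · (((1−q) t^{1−p} C + (1−p) t^{1−q} D)/(t^{1−p} C + t^{1−q} D)) · Q_e'(t). -/
/-- For every `t > 0`,
`Q_n(t) − Q_e(t) = (t/((1−p)(1−q))) · (((1−q) t^{1−p} C + (1−p) t^{1−q} D)/(t^{1−p} C + t^{1−q} D)) · Q_e'(t)`. -/
theorem stmt_8 (A B C D θ p q α β : ℝ)
    (hA : 0 < A) (hB : 0 < B) (hC : 0 < C) (hD : 0 < D) (hθ : 0 < θ)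
    (hp : 0 < p) (hpq : p ≤ q) (hq : q < 1) (hα : 1 < α) (hβ : 1 < β)
    (hαβ : 2 < α + β)
    (Qn Qe : ℝ → ℝ)
    (hQn : Qn = fun t : ℝ =>
      (A * t ^ (2 : ℝ) - θ * B * t ^ (α + β)) /
        (C * t ^ (1 - p) + D * t ^ (1 - q)))
    (hQe : Qe = fun t : ℝ =>
      ((1 / 2) * A * t ^ (2 : ℝ) - (θ / (α + β)) * B * t ^ (α + β)) /
        ((1 / (1 - p)) * C * t ^ (1 - p) + (1 / (1 - q)) * D * t ^ (1 - q))) :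
    ∀ t : ℝ, 0 < t →
      Qn t - Qe t =
        (t / ((1 - p) * (1 - q))) *
          (((1 - q) * t ^ (1 - p) * C + (1 - p) * t ^ (1 - q) * D) /
            (t ^ (1 - p) * C + t ^ (1 - q) * D)) * deriv Qe t := by
  intro t ht
  have htne : t ≠ 0 := ht.ne'
  have hp1 : (0:ℝ) < 1 - p := by linarith
  have hq1 : (0:ℝ) < 1 - q := by linarith
  have hab : (0:ℝ) < α + β := by linarith
  have htp : 0 < t ^ (1-p) := Real.rpow_pos_of_pos ht _
  have htq : 0 < t ^ (1-q) := Real.rpow_pos_of_pos ht _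
  have hden : 0 < (1/(1-p)) * C * t^(1-p) + (1/(1-q)) * D * t^(1-q) := by positivity
  have hden1 : 0 < C * t^(1-p) + D * t^(1-q) := by positivity
  have hden2 : 0 < t^(1-p) * C + t^(1-q) * D := by positivity
  have h2 : HasDerivAt (fun x:ℝ => x ^ (2:ℝ)) (2 * t ^ ((2:ℝ)-1)) t :=
    Real.hasDerivAt_rpow_const (Or.inl htne)
  have habd : HasDerivAt (fun x:ℝ => x ^ (α+β)) ((α+β) * t ^ (α+β-1)) t :=
    Real.hasDerivAt_rpow_const (Or.inl htne)
  have hpd : HasDerivAt (fun x:ℝ => x ^ (1-p)) ((1-p) * t ^ (1-p-1)) t :=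
    Real.hasDerivAt_rpow_const (Or.inl htne)
  have hqd : HasDerivAt (fun x:ℝ => x ^ (1-q)) ((1-q) * t ^ (1-q-1)) t :=
    Real.hasDerivAt_rpow_const (Or.inl htne)
  have hnum : HasDerivAt (fun x:ℝ => (1/2)*A*x^(2:ℝ) - (θ/(α+β))*B*x^(α+β))
      ((1/2)*A*(2 * t ^ ((2:ℝ)-1)) - (θ/(α+β))*B*((α+β) * t ^ (α+β-1))) t :=
    (h2.const_mul ((1/2)*A)).sub (habd.const_mul ((θ/(α+β))*B))
  have hdend : HasDerivAt (fun x:ℝ => (1/(1-p))*C*x^(1-p) + (1/(1-q))*D*x^(1-q))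
      ((1/(1-p))*C*((1-p) * t ^ (1-p-1)) + (1/(1-q))*D*((1-q) * t ^ (1-q-1))) t :=
    (hpd.const_mul ((1/(1-p))*C)).add (hqd.const_mul ((1/(1-q))*D))
  have hQ : HasDerivAt Qe
      ((((1/2)*A*(2 * t ^ ((2:ℝ)-1)) - (θ/(α+β))*B*((α+β) * t ^ (α+β-1))) *
        ((1/(1-p))*C*t^(1-p) + (1/(1-q))*D*t^(1-q)) -
        ((1/2)*A*t^(2:ℝ) - (θ/(α+β))*B*t^(α+β)) *
        ((1/(1-p))*C*((1-p) * t ^ (1-p-1)) + (1/(1-q))*D*((1-q) * t ^ (1-q-1)))) /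
        ((1/(1-p))*C*t^(1-p) + (1/(1-q))*D*t^(1-q))^2) t := by
    rw [hQe]
    exact hnum.div hdend hden.ne'
  rw [hQ.deriv, hQn, hQe]
  simp only []
  have e1 : t ^ ((2:ℝ)-1) = t ^ (2:ℝ) / t := by
    rw [Real.rpow_sub ht, Real.rpow_one]
  have e2 : t ^ (α+β-1) = t ^ (α+β) / t := by
    rw [Real.rpow_sub ht, Real.rpow_one]
  have e3 : t ^ (1-p-1) = t ^ (1-p) / t := by
    rw [Real.rpow_sub ht, Real.rpow_one]
  have e4 : t ^ (1-q-1) = t ^ (1-q) / t := by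
    rw [Real.rpow_sub ht, Real.rpow_one]
  rw [e1, e2, e3, e4]
  field_simp
end

section
/- For every t > 0: Q_n(t) > Q_e(t) if and only if Q_e'(t) > 0; Q_n(t) < Q_e(t) if and only if Q_e'(t) < 0; and Q_n(t) = Q_e(t) if and only if Q_e'(t) = 0. -/
private lemma aux_sign (k a b : ℝ) (hk : 0 < k) :
    (a > b ↔ k * (a - b) > 0) ∧ (a < b ↔ k * (a - b) < 0) ∧
    (a = b ↔ k * (a - b) = 0) := by
  refine ⟨⟨fun h => ?_, fun h => ?_⟩, ⟨fun h => ?_, fun h => ?_⟩, fun h => ?_, fun h => ?_⟩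
  · exact mul_pos hk (sub_pos.mpr h)
  · by_contra hle; push_neg at hle; nlinarith
  · exact mul_neg_of_pos_of_neg hk (sub_neg.mpr h)
  · by_contra hle; push_neg at hle; nlinarith
  · rw [h, sub_self, mul_zero]
  · rcases mul_eq_zero.mp h with h0 | h0
    · exact absurd h0 (ne_of_gt hk)
    · exact (sub_eq_zero.mp h0).symm ▸ rfl

/-- For every `t > 0`: `Q_n(t) > Q_e(t) ↔ Q_e'(t) > 0`;
`Q_n(t) < Q_e(t) ↔ Q_e'(t) < 0`; and `Q_n(t) = Q_e(t) ↔ Q_e'(t) = 0`. -/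
theorem stmt_9 (A B C D θ p q α β : ℝ)
    (hA : 0 < A) (hB : 0 < B) (hC : 0 < C) (hD : 0 < D) (hθ : 0 < θ)
    (hp : 0 < p) (hpq : p ≤ q) (hq : q < 1) (hα : 1 < α) (hβ : 1 < β)
    (hαβ : 2 < α + β)
    (Qn Qe : ℝ → ℝ)
    (hQn : Qn = fun t : ℝ =>
      (A * t ^ (2 : ℝ) - θ * B * t ^ (α + β)) /
        (C * t ^ (1 - p) + D * t ^ (1 - q)))
    (hQe : Qe = fun t : ℝ =>
      ((1 / 2) * A * t ^ (2 : ℝ) - (θ / (α + β)) * B * t ^ (α + β)) /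
        ((1 / (1 - p)) * C * t ^ (1 - p) + (1 / (1 - q)) * D * t ^ (1 - q))) :
    ∀ t : ℝ, 0 < t →
      (Qn t > Qe t ↔ deriv Qe t > 0) ∧
      (Qn t < Qe t ↔ deriv Qe t < 0) ∧
      (Qn t = Qe t ↔ deriv Qe t = 0) := by
  subst hQn hQe
  intro t ht
  have ht0 : t ≠ 0 := ne_of_gt ht
  have hp1 : (0:ℝ) < 1 - p := by linarith
  have hq1 : (0:ℝ) < 1 - q := by linarith [lt_of_le_of_lt hpq hq]
  have hq1' : q < 1 := hq
  have hab0 : (0:ℝ) < α + β := by linarith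
  -- positivity of powers
  have hPsp : 0 < t ^ (1 - p) := Real.rpow_pos_of_pos ht _
  have hPsq : 0 < t ^ (1 - q) := Real.rpow_pos_of_pos ht _
  have hE : 0 < (1 / (1 - p)) * C * t ^ (1 - p) + (1 / (1 - q)) * D * t ^ (1 - q) := by
    positivity
  have hE0 : ((1 / (1 - p)) * C * t ^ (1 - p) + (1 / (1 - q)) * D * t ^ (1 - q)) ≠ 0 :=
    ne_of_gt hE
  have hEn : 0 < C * t ^ (1 - p) + D * t ^ (1 - q) := by positivity
  -- derivative of Qe
  have h1 : HasDerivAt (fun x : ℝ => (1/2) * A * x ^ (2:ℝ))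
      ((1/2) * A * (2 * t ^ ((2:ℝ) - 1))) t :=
    (Real.hasDerivAt_rpow_const (Or.inl ht0)).const_mul _
  have h2 : HasDerivAt (fun x : ℝ => (θ / (α + β)) * B * x ^ (α + β))
      ((θ / (α + β)) * B * ((α + β) * t ^ (α + β - 1))) t :=
    (Real.hasDerivAt_rpow_const (Or.inl ht0)).const_mul _
  have h3 : HasDerivAt (fun x : ℝ => (1 / (1 - p)) * C * x ^ (1 - p))
      ((1 / (1 - p)) * C * ((1 - p) * t ^ (1 - p - 1))) t :=
    (Real.hasDerivAt_rpow_const (Or.inl ht0)).const_mul _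
  have h4 : HasDerivAt (fun x : ℝ => (1 / (1 - q)) * D * x ^ (1 - q))
      ((1 / (1 - q)) * D * ((1 - q) * t ^ (1 - q - 1))) t :=
    (Real.hasDerivAt_rpow_const (Or.inl ht0)).const_mul _
  have hDer := ((h1.sub h2).div (h3.add h4) hE0)
  have hderiv : deriv (fun t : ℝ =>
      ((1 / 2) * A * t ^ (2 : ℝ) - (θ / (α + β)) * B * t ^ (α + β)) /
        ((1 / (1 - p)) * C * t ^ (1 - p) + (1 / (1 - q)) * D * t ^ (1 - q))) t
      = (((1/2) * A * (2 * t ^ ((2:ℝ) - 1)) - (θ / (α + β)) * B * ((α + β) * t ^ (α + β - 1))) *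
          ((1 / (1 - p)) * C * t ^ (1 - p) + (1 / (1 - q)) * D * t ^ (1 - q)) -
          ((1/2) * A * t ^ (2:ℝ) - (θ / (α + β)) * B * t ^ (α + β)) *
          ((1 / (1 - p)) * C * ((1 - p) * t ^ (1 - p - 1)) + (1 / (1 - q)) * D * ((1 - q) * t ^ (1 - q - 1)))) /
          ((1 / (1 - p)) * C * t ^ (1 - p) + (1 / (1 - q)) * D * t ^ (1 - q)) ^ 2 :=
    hDer.deriv
  -- abbreviations for powers
  set X := t ^ (-p) with hX
  set Y := t ^ (-q) with hY
  set Z := t ^ (α + β - 1) with hZ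
  have gen : ∀ r : ℝ, t ^ (r + 1) = t * t ^ r := fun r => by
    rw [Real.rpow_add ht, Real.rpow_one, mul_comm]
  have hrX : t ^ (1 - p) = t * X := by rw [hX, ← gen]; ring_nf
  have hrY : t ^ (1 - q) = t * Y := by rw [hY, ← gen]; ring_nf
  have hrZ : t ^ (α + β) = t * Z := by rw [hZ, ← gen]; ring_nf
  have hr2 : t ^ (2:ℝ) = t * t := by
    rw [show (2:ℝ) = 1 + 1 by norm_num, Real.rpow_add ht, Real.rpow_one]
  have hr21 : t ^ ((2:ℝ) - 1) = t := by norm_num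
  have hrXp : t ^ (1 - p - 1) = X := by rw [hX]; ring_nf
  have hrYp : t ^ (1 - q - 1) = Y := by rw [hY]; ring_nf
  have hXpos : 0 < X := Real.rpow_pos_of_pos ht _
  have hYpos : 0 < Y := Real.rpow_pos_of_pos ht _
  have hZpos : 0 < Z := Real.rpow_pos_of_pos ht _
  -- key: deriv Qe t = ((C*X + D*Y)/E) * (Qn t - Qe t)
  set E := (1 / (1 - p)) * C * t ^ (1 - p) + (1 / (1 - q)) * D * t ^ (1 - q) with hEdef
  have hk : 0 < (C * X + D * Y) / E := by positivity
  have key : deriv (fun t : ℝ =>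
      ((1 / 2) * A * t ^ (2 : ℝ) - (θ / (α + β)) * B * t ^ (α + β)) /
        ((1 / (1 - p)) * C * t ^ (1 - p) + (1 / (1 - q)) * D * t ^ (1 - q))) t
      = ((C * X + D * Y) / E) *
        ((A * t ^ (2 : ℝ) - θ * B * t ^ (α + β)) /
            (C * t ^ (1 - p) + D * t ^ (1 - q)) -
          ((1 / 2) * A * t ^ (2 : ℝ) - (θ / (α + β)) * B * t ^ (α + β)) /
            ((1 / (1 - p)) * C * t ^ (1 - p) + (1 / (1 - q)) * D * t ^ (1 - q))) := by
    rw [hderiv, hEdef]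
    rw [hrX, hrY, hrZ, hr2, hr21, hrXp, hrYp]
    have h1' : (1 / (1 - p)) * C * (t * X) + (1 / (1 - q)) * D * (t * Y) ≠ 0 := by positivity
    have h2' : C * (t * X) + D * (t * Y) ≠ 0 := by positivity
    field_simp
  rw [key]
  exact aux_sign _ _ _ hk
end

section
/- Assume in addition p = q. Then for every t > 0, Q_n(t) − Q_e(t) = t (1−p)^{−1} Q_e'(t). -/
set_option maxHeartbeats 2000000 in
/-- If `p = q`, then for every `t > 0`,
`Q_n(t) − Q_e(t) = t (1−p)⁻¹ Q_e'(t)`. -/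
theorem stmt_10 (A B C D θ p q α β : ℝ)
    (hA : 0 < A) (hB : 0 < B) (hC : 0 < C) (hD : 0 < D) (hθ : 0 < θ)
    (hp : 0 < p) (hpq : p ≤ q) (hq : q < 1) (hα : 1 < α) (hβ : 1 < β)
    (hαβ : 2 < α + β) (hpeq : p = q)
    (Qn Qe : ℝ → ℝ)
    (hQn : Qn = fun t : ℝ =>
      (A * t ^ (2 : ℝ) - θ * B * t ^ (α + β)) /
        (C * t ^ (1 - p) + D * t ^ (1 - q)))
    (hQe : Qe = fun t : ℝ =>
      ((1 / 2) * A * t ^ (2 : ℝ) - (θ / (α + β)) * B * t ^ (α + β)) /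
        ((1 / (1 - p)) * C * t ^ (1 - p) + (1 / (1 - q)) * D * t ^ (1 - q))) :
    ∀ t : ℝ, 0 < t → Qn t - Qe t = t * (1 - p)⁻¹ * deriv Qe t := by
  subst hpeq
  intro t ht
  have ht' : t ≠ 0 := ht.ne'
  have hs : (0:ℝ) < α + β := by linarith
  have h1p : (0:ℝ) < 1 - p := by linarith
  -- derivative pieces
  have hf : HasDerivAt (fun t : ℝ =>
      (1 / 2) * A * t ^ (2 : ℝ) - (θ / (α + β)) * B * t ^ (α + β))
      ((1 / 2) * A * ((2 : ℝ) * t ^ ((2:ℝ) - 1)) -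
        (θ / (α + β)) * B * ((α + β) * t ^ (α + β - 1))) t := by
    exact ((Real.hasDerivAt_rpow_const (Or.inl ht')).const_mul ((1/2)*A)).sub
      ((Real.hasDerivAt_rpow_const (Or.inl ht')).const_mul ((θ/(α+β))*B))
  have hg : HasDerivAt (fun t : ℝ =>
      (1 / (1 - p)) * C * t ^ (1 - p) + (1 / (1 - p)) * D * t ^ (1 - p))
      ((1 / (1 - p)) * C * ((1 - p) * t ^ (1 - p - 1)) +
        (1 / (1 - p)) * D * ((1 - p) * t ^ (1 - p - 1))) t := by
    exact ((Real.hasDerivAt_rpow_const (Or.inl ht')).const_mul ((1/(1-p))*C)).add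
      ((Real.hasDerivAt_rpow_const (Or.inl ht')).const_mul ((1/(1-p))*D))
  have hY : (0:ℝ) < t ^ (1 - p) := Real.rpow_pos_of_pos ht _
  have hg0 : (1 / (1 - p)) * C * t ^ (1 - p) + (1 / (1 - p)) * D * t ^ (1 - p) ≠ 0 := by
    positivity
  have hderiv : deriv Qe t =
      (((1 / 2) * A * ((2 : ℝ) * t ^ ((2:ℝ) - 1)) -
        (θ / (α + β)) * B * ((α + β) * t ^ (α + β - 1))) *
        ((1 / (1 - p)) * C * t ^ (1 - p) + (1 / (1 - p)) * D * t ^ (1 - p)) -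
        ((1 / 2) * A * t ^ (2 : ℝ) - (θ / (α + β)) * B * t ^ (α + β)) *
        ((1 / (1 - p)) * C * ((1 - p) * t ^ (1 - p - 1)) +
          (1 / (1 - p)) * D * ((1 - p) * t ^ (1 - p - 1)))) /
        ((1 / (1 - p)) * C * t ^ (1 - p) + (1 / (1 - p)) * D * t ^ (1 - p)) ^ 2 := by
    rw [hQe]
    exact (hf.div hg hg0).deriv
  rw [hderiv]
  simp only [hQn, hQe]
  have e0 : t ^ ((2:ℝ)) = t ^ (2:ℕ) := by
    rw [show ((2:ℝ)) = ((2:ℕ):ℝ) by norm_num, Real.rpow_natCast]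
  have e1 : t ^ ((2:ℝ) - 1) = t := by norm_num
  have e2 : t ^ (α + β - 1) = t ^ (α + β) / t := by
    rw [Real.rpow_sub ht, Real.rpow_one]
  have e3 : t ^ (1 - p - 1) = t ^ (1 - p) / t := by
    rw [Real.rpow_sub ht, Real.rpow_one]
  rw [e0, e1, e2, e3]
  set X := t ^ (α + β) with hX
  set Y := t ^ (1 - p) with hYdef
  have hXpos : (0:ℝ) < X := Real.rpow_pos_of_pos ht _
  have hsne : α + β ≠ 0 := hs.ne'
  have h1pne : (1:ℝ) - p ≠ 0 := h1p.ne'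
  field_simp
end

section
/- Define f(x) = (1+x)/(α+β−1+x). If Q_n'(1) = 0, then f(p) · A ≤ θ B ≤ f(q) · A. -/
/-- With `f(x) = (1+x)/(α+β−1+x)`, if `Q_n'(1) = 0`, then
`f(p) A ≤ θ B ≤ f(q) A`. -/
theorem stmt_12 (A B C D θ p q α β : ℝ)
    (hA : 0 < A) (hB : 0 < B) (hC : 0 < C) (hD : 0 < D) (hθ : 0 < θ)
    (hp : 0 < p) (hpq : p ≤ q) (hq : q < 1) (hα : 1 < α) (hβ : 1 < β)
    (hαβ : 2 < α + β)
    (Qn : ℝ → ℝ)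
    (hQn : Qn = fun t : ℝ =>
      (A * t ^ (2 : ℝ) - θ * B * t ^ (α + β)) /
        (C * t ^ (1 - p) + D * t ^ (1 - q)))
    (f : ℝ → ℝ) (hf : f = fun x : ℝ => (1 + x) / (α + β - 1 + x))
    (hcrit : deriv Qn 1 = 0) :
    f p * A ≤ θ * B ∧ θ * B ≤ f q * A := by
  -- derivatives of the pieces at 1
  have h2 : HasDerivAt (fun t : ℝ => A * t ^ (2 : ℝ)) (A * 2) 1 := by
    have := (Real.hasDerivAt_rpow_const (p := (2:ℝ)) (x := 1) (Or.inl one_ne_zero)).const_mul A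
    simpa using this
  have h3 : HasDerivAt (fun t : ℝ => θ * B * t ^ (α + β)) (θ * B * (α + β)) 1 := by
    have := (Real.hasDerivAt_rpow_const (p := α + β) (x := 1) (Or.inl one_ne_zero)).const_mul (θ * B)
    simpa using this
  have h4 : HasDerivAt (fun t : ℝ => C * t ^ (1 - p)) (C * (1 - p)) 1 := by
    have := (Real.hasDerivAt_rpow_const (p := 1 - p) (x := 1) (Or.inl one_ne_zero)).const_mul C
    simpa using this
  have h5 : HasDerivAt (fun t : ℝ => D * t ^ (1 - q)) (D * (1 - q)) 1 := by
    have := (Real.hasDerivAt_rpow_const (p := 1 - q) (x := 1) (Or.inl one_ne_zero)).const_mul D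
    simpa using this
  have hnum : HasDerivAt (fun t : ℝ => A * t ^ (2 : ℝ) - θ * B * t ^ (α + β))
      (A * 2 - θ * B * (α + β)) 1 := h2.sub h3
  have hden : HasDerivAt (fun t : ℝ => C * t ^ (1 - p) + D * t ^ (1 - q))
      (C * (1 - p) + D * (1 - q)) 1 := h4.add h5
  have hden1 : (fun t : ℝ => C * t ^ (1 - p) + D * t ^ (1 - q)) 1 = C + D := by
    simp
  have hCD : (0:ℝ) < C + D := by linarith
  have hQ : HasDerivAt Qn
      (((A * 2 - θ * B * (α + β)) * (C + D) -
        (A - θ * B) * (C * (1 - p) + D * (1 - q))) / (C + D) ^ 2) 1 := by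
    rw [hQn]
    have := hnum.div hden (by simpa using ne_of_gt hCD)
    simpa [hden1, Pi.div_def] using this
  have hkey : (A * 2 - θ * B * (α + β)) * (C + D) -
      (A - θ * B) * (C * (1 - p) + D * (1 - q)) = 0 := by
    have hd := hQ.deriv
    rw [hcrit] at hd
    have := (div_eq_zero_iff.mp hd.symm).resolve_right (by positivity)
    linarith [this]
  -- hkey rearranges to:
  have hkey2 : C * (A * (1 + p) - θ * B * (α + β - 1 + p)) +
      D * (A * (1 + q) - θ * B * (α + β - 1 + q)) = 0 := by ring_nf; nlinarith [hkey]
  have hsp : (0:ℝ) < α + β - 1 + p := by linarith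
  have hsq : (0:ℝ) < α + β - 1 + q := by linarith
  rw [hf]
  have hmono : A * ((1 + p) * (α + β - 1 + q) - (1 + q) * (α + β - 1 + p)) ≤ 0 := by
    nlinarith [mul_nonneg (mul_nonneg hA.le (sub_nonneg.mpr hpq)) (by linarith : (0:ℝ) ≤ α + β - 2)]
  have hring : (α + β - 1 + p) * (θ * B * (α + β - 1 + q) - A * (1 + q)) +
      (α + β - 1 + q) * (A * (1 + p) - θ * B * (α + β - 1 + p)) =
      A * ((1 + p) * (α + β - 1 + q) - (1 + q) * (α + β - 1 + p)) := by ring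
  constructor
  · rw [div_mul_eq_mul_div, div_le_iff₀ hsp]
    by_contra hcon
    push_neg at hcon
    have h1 : 0 < A * (1 + p) - θ * B * (α + β - 1 + p) := by linarith
    have h2 : 0 < A * (1 + q) - θ * B * (α + β - 1 + q) := by
      by_contra h2'
      push_neg at h2'
      have t1 := mul_pos hsq h1
      have t2 : 0 ≤ (α + β - 1 + p) * (θ * B * (α + β - 1 + q) - A * (1 + q)) :=
        mul_nonneg hsp.le (by linarith)
      linarith
    nlinarith [mul_pos hC h1, mul_pos hD h2]
  · rw [div_mul_eq_mul_div, le_div_iff₀ hsq]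
    by_contra hcon
    push_neg at hcon
    have h1 : A * (1 + q) - θ * B * (α + β - 1 + q) < 0 := by linarith
    have h2 : A * (1 + p) - θ * B * (α + β - 1 + p) < 0 := by
      by_contra h2'
      push_neg at h2'
      have t1 := mul_pos hsp (by linarith : (0:ℝ) < θ * B * (α + β - 1 + q) - A * (1 + q))
      have t2 : 0 ≤ (α + β - 1 + q) * (A * (1 + p) - θ * B * (α + β - 1 + p)) :=
        mul_nonneg hsq.le h2'
      linarith
    nlinarith [mul_pos hC (neg_pos.mpr h2), mul_pos hD (neg_pos.mpr h1)]
end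

section
/- Define f(x) = (1+x)/(α+β−1+x). If Q_e'(1) = 0, then ((α+β)/2) f(p) A ≤ θ B ≤ ((α+β)/2) f(q) A. -/
set_option maxHeartbeats 1000000


/-- With `f(x) = (1+x)/(α+β−1+x)`, if `Q_e'(1) = 0`, then
`((α+β)/2) f(p) A ≤ θ B ≤ ((α+β)/2) f(q) A`. -/
theorem stmt_13 (A B C D θ p q α β : ℝ)
    (hA : 0 < A) (hB : 0 < B) (hC : 0 < C) (hD : 0 < D) (hθ : 0 < θ)
    (hp : 0 < p) (hpq : p ≤ q) (hq : q < 1) (hα : 1 < α) (hβ : 1 < β)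
    (hαβ : 2 < α + β)
    (Qe : ℝ → ℝ)
    (hQe : Qe = fun t : ℝ =>
      ((1 / 2) * A * t ^ (2 : ℝ) - (θ / (α + β)) * B * t ^ (α + β)) /
        ((1 / (1 - p)) * C * t ^ (1 - p) + (1 / (1 - q)) * D * t ^ (1 - q)))
    (f : ℝ → ℝ) (hf : f = fun x : ℝ => (1 + x) / (α + β - 1 + x))
    (hcrit : deriv Qe 1 = 0) :
    ((α + β) / 2) * f p * A ≤ θ * B ∧ θ * B ≤ ((α + β) / 2) * f q * A := by
  have h1p : (0:ℝ) < 1 - p := by linarith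
  have h1q : (0:ℝ) < 1 - q := by linarith
  have hs : (0:ℝ) < α + β := by linarith
  have hn1 : HasDerivAt (fun t : ℝ => (1 / 2) * A * t ^ (2:ℝ))
      ((1/2) * A * (2 * (1:ℝ) ^ ((2:ℝ) - 1))) 1 :=
    (Real.hasDerivAt_rpow_const (Or.inl one_ne_zero)).const_mul _
  have hn2 : HasDerivAt (fun t : ℝ => (θ / (α + β)) * B * t ^ (α + β))
      ((θ / (α + β)) * B * ((α + β) * (1:ℝ) ^ (α + β - 1))) 1 :=
    (Real.hasDerivAt_rpow_const (Or.inl one_ne_zero)).const_mul _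
  have hd1 : HasDerivAt (fun t : ℝ => (1 / (1 - p)) * C * t ^ (1 - p))
      ((1 / (1 - p)) * C * ((1 - p) * (1:ℝ) ^ (1 - p - 1))) 1 :=
    (Real.hasDerivAt_rpow_const (Or.inl one_ne_zero)).const_mul _
  have hd2 : HasDerivAt (fun t : ℝ => (1 / (1 - q)) * D * t ^ (1 - q))
      ((1 / (1 - q)) * D * ((1 - q) * (1:ℝ) ^ (1 - q - 1))) 1 :=
    (Real.hasDerivAt_rpow_const (Or.inl one_ne_zero)).const_mul _
  have hEpos : (0:ℝ) < (1 / (1 - p)) * C * (1:ℝ) ^ (1 - p) + (1 / (1 - q)) * D * (1:ℝ) ^ (1 - q) := by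
    rw [Real.one_rpow, Real.one_rpow]
    positivity
  have hQ := (hn1.sub hn2).div (hd1.add hd2) (ne_of_gt hEpos)
  simp only [Pi.sub_def, Pi.add_def, Pi.div_def] at hQ
  rw [← hQe] at hQ
  have hval := hQ.deriv
  rw [hcrit] at hval
  simp only [Real.one_rpow] at hval
  field_simp at hval
  -- hval : (A - θ*B) * (C*(1-q) + D*(1-p)) * (2*(α+β))
  --        - (1-p)*(1-q)*((A*(α+β) - 2*(θ*B)) * (C+D)) = 0
  set T := θ * B with hT
  set s := α + β with hsdef
  -- key: C * u + D * v = 0 where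
  have hkey : C * (2*s*(A-T)*(1-q) - (s*A-2*T)*(1-p)*(1-q))
      + D * (2*s*(A-T)*(1-p) - (s*A-2*T)*(1-p)*(1-q)) = 0 := by
    have h0 : (1-p)*(1-q)*(C * (2*s*(A-T)*(1-q) - (s*A-2*T)*(1-p)*(1-q))
        + D * (2*s*(A-T)*(1-p) - (s*A-2*T)*(1-p)*(1-q))) = 0 := by
      linear_combination -hval
    rcases mul_eq_zero.mp h0 with h | h
    · exact absurd h (mul_pos h1p h1q).ne'
    · exact h
  clear hQ hval hcrit hQe hn1 hn2 hd1 hd2 hEpos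
  -- main claims (divided by the positive factors (1-q) resp. (1-p))
  have hup : 2*s*(A-T) ≤ (s*A-2*T)*(1-p) := by
    by_contra hcon
    push_neg at hcon
    have hu : 0 < 2*s*(A-T)*(1-q) - (s*A-2*T)*(1-p)*(1-q) := by
      have h := mul_pos h1q (show (0:ℝ) < 2*s*(A-T) - (s*A-2*T)*(1-p) by linarith)
      linarith [h]
    have hv : 2*s*(A-T)*(1-p) - (s*A-2*T)*(1-p)*(1-q) < 0 := by
      by_contra h
      push_neg at h
      have h1 := mul_pos hC hu
      have h2 := mul_nonneg hD.le h
      linarith [h1, h2, hkey]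
    have hv' : 2*s*(A-T) < (s*A-2*T)*(1-q) := by
      by_contra h
      push_neg at h
      have := mul_nonneg h1p.le (show (0:ℝ) ≤ 2*s*(A-T) - (s*A-2*T)*(1-q) by linarith)
      linarith [this]
    have hX : s*A - 2*T < 0 := by
      by_contra h
      push_neg at h
      have := mul_le_mul_of_nonneg_left (show 1-q ≤ 1-p by linarith) h
      linarith
    have P1 := mul_pos (show (0:ℝ) < 2*T - s*A by linarith)
      (show (0:ℝ) < s - 1 + p by linarith)
    have P2 := mul_pos (mul_pos hs hA) (show (0:ℝ) < s - 2 by linarith)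
    linarith [P1, P2]
  have hvq : (s*A-2*T)*(1-q) ≤ 2*s*(A-T) := by
    by_contra hcon
    push_neg at hcon
    have hv : 2*s*(A-T)*(1-p) - (s*A-2*T)*(1-p)*(1-q) < 0 := by
      have h := mul_pos h1p (show (0:ℝ) < (s*A-2*T)*(1-q) - 2*s*(A-T) by linarith)
      linarith [h]
    have hu : 0 < 2*s*(A-T)*(1-q) - (s*A-2*T)*(1-p)*(1-q) := by
      by_contra h
      push_neg at h
      have h1 := mul_pos hD (show (0:ℝ) < (s*A-2*T)*(1-p)*(1-q) - 2*s*(A-T)*(1-p) by linarith)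
      have h2 := mul_nonneg hC.le (show (0:ℝ) ≤ (s*A-2*T)*(1-p)*(1-q) - 2*s*(A-T)*(1-q) by linarith)
      linarith [h1, h2, hkey]
    have hu' : (s*A-2*T)*(1-p) < 2*s*(A-T) := by
      by_contra h
      push_neg at h
      have := mul_nonneg h1q.le (show (0:ℝ) ≤ (s*A-2*T)*(1-p) - 2*s*(A-T) by linarith)
      linarith [this]
    have hX : s*A - 2*T < 0 := by
      by_contra h
      push_neg at h
      have := mul_le_mul_of_nonneg_left (show 1-q ≤ 1-p by linarith) h
      linarith
    have P1 := mul_pos (show (0:ℝ) < 2*T - s*A by linarith)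
      (show (0:ℝ) < s - 1 + p by linarith)
    have P2 := mul_pos (mul_pos hs hA) (show (0:ℝ) < s - 2 by linarith)
    linarith [P1, P2, hu']
  rw [hf]
  have hdp : (0:ℝ) < α + β - 1 + p := by linarith
  have hdq : (0:ℝ) < α + β - 1 + q := by linarith
  constructor
  · rw [show ((α+β)/2) * ((1+p)/(α+β-1+p)) * A = ((α+β)*(1+p)*A)/(2*(α+β-1+p)) by
        field_simp,
      div_le_iff₀ (by linarith)]
    simp only [← hsdef, ← hT]
    linarith [hup]
  · rw [show ((α+β)/2) * ((1+q)/(α+β-1+q)) * A = ((α+β)*(1+q)*A)/(2*(α+β-1+q)) by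
        field_simp,
      le_div_iff₀ (by linarith)]
    simp only [← hsdef, ← hT]
    linarith [hvq]
end

section
/- Let t_n > 0 be the unique critical point of Q_n and let λ satisfy 0 < λ < Q_n(t_n). Then the equation Q_n(t) = λ has exactly two solutions t⁺, t⁻ with 0 < t⁺ < t_n < t⁻. Moreover, the fiber energy γ_λ(t) = (1/2) A t² − (λ/(1−p)) C t^{1−p} − (λ/(1−q)) D t^{1−q} − (θ/(α+β)) B t^{α+β} has exactly two critical points on (0, ∞), namely t⁺ and t⁻, with γ_λ''(t⁺) > 0 (so t⁺ is a local minimum point of γ_λ) and γ_λ''(t⁻) < 0 (so t⁻ is a local maximum point of γ_λ). -/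
open Real Set Filter Topology

lemma stmt17_rpow_split (t r : ℝ) (ht : t ≠ 0) : t ^ r = t ^ (r-1) * t := by
  have h := Real.rpow_add_one ht (r-1)
  rw [show r-1+1 = r by ring] at h
  exact h

lemma stmt17_cmul_rpow (c r t : ℝ) (ht : 0 < t) :
    HasDerivAt (fun x : ℝ => c * x ^ r) (c * r * t ^ (r - 1)) t := by
  simpa [mul_assoc] using (Real.hasDerivAt_rpow_const (p := r) (Or.inl ht.ne')).const_mul c

set_option maxHeartbeats 2000000 in
/-- Let `t_n > 0` be the unique critical point of `Q_n` on `(0,∞)` and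
`0 < λ < Q_n(t_n)`. Then `Q_n(t) = λ` has exactly two solutions `t⁺ < t_n < t⁻`, and
the fiber energy `γ_λ` has exactly two critical points on `(0,∞)`, namely `t⁺` and
`t⁻`, with `γ_λ''(t⁺) > 0` (local minimum) and `γ_λ''(t⁻) < 0` (local maximum). -/
theorem stmt_17 (A B C D θ p q α β lam tn : ℝ)
    (hA : 0 < A) (hB : 0 < B) (hC : 0 < C) (hD : 0 < D) (hθ : 0 < θ)
    (hp : 0 < p) (hpq : p ≤ q) (hq : q < 1) (hα : 1 < α) (hβ : 1 < β)
    (hαβ : 2 < α + β)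
    (Qn γ : ℝ → ℝ)
    (hQn : Qn = fun t : ℝ =>
      (A * t ^ (2 : ℝ) - θ * B * t ^ (α + β)) /
        (C * t ^ (1 - p) + D * t ^ (1 - q)))
    (hγ : γ = fun t : ℝ =>
      (1 / 2) * A * t ^ (2 : ℝ) - (lam / (1 - p)) * C * t ^ (1 - p) -
        (lam / (1 - q)) * D * t ^ (1 - q) - (θ / (α + β)) * B * t ^ (α + β))
    (htn : 0 < tn) (htncrit : deriv Qn tn = 0)
    (htnuniq : ∀ t : ℝ, 0 < t → deriv Qn t = 0 → t = tn)
    (hlam : 0 < lam) (hlamlt : lam < Qn tn) :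
    ∃ tp tm : ℝ, 0 < tp ∧ tp < tn ∧ tn < tm ∧
      Qn tp = lam ∧ Qn tm = lam ∧
      (∀ t : ℝ, 0 < t → Qn t = lam → t = tp ∨ t = tm) ∧
      deriv γ tp = 0 ∧ deriv γ tm = 0 ∧
      (∀ t : ℝ, 0 < t → deriv γ t = 0 → t = tp ∨ t = tm) ∧
      0 < deriv (deriv γ) tp ∧ deriv (deriv γ) tm < 0 ∧
      IsLocalMin γ tp ∧ IsLocalMax γ tm := by
  have hq1 : p < 1 := lt_of_le_of_lt hpq hq
  have hne1 : (1:ℝ) - p ≠ 0 := by linarith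
  have hne2 : (1:ℝ) - q ≠ 0 := by linarith
  have hne3 : α + β ≠ 0 := by linarith
  set G1 : ℝ → ℝ := fun t => A*t - lam*C*t^(-p) - lam*D*t^(-q) - θ*B*t^(α+β-1) with hG1def
  set G2 : ℝ → ℝ := fun t => A + lam*p*C*t^(-p-1) + lam*q*D*t^(-q-1) - θ*B*(α+β-1)*t^(α+β-2)
    with hG2def
  have hMpos : ∀ t : ℝ, 0 < t → 0 < C*t^(1-p) + D*t^(1-q) := by
    intro t ht; positivity
  have hQval : ∀ t : ℝ, Qn t = (A * t ^ (2:ℝ) - θ*B*t^(α+β)) / (C*t^(1-p) + D*t^(1-q)) := by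
    intro t; rw [hQn]
  -- derivative of γ
  have hγd : ∀ t : ℝ, 0 < t → HasDerivAt γ (G1 t) t := by
    intro t ht
    rw [hγ]
    have h1 := stmt17_cmul_rpow ((1/2)*A) 2 t ht
    have h2 := stmt17_cmul_rpow ((lam/(1-p))*C) (1-p) t ht
    have h3 := stmt17_cmul_rpow ((lam/(1-q))*D) (1-q) t ht
    have h4 := stmt17_cmul_rpow ((θ/(α+β))*B) (α+β) t ht
    refine (((h1.sub h2).sub h3).sub h4).congr_deriv (Eq.symm ?_)
    rw [hG1def]
    rw [show (2:ℝ)-1 = 1 by norm_num, Real.rpow_one,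
      show (1:ℝ)-p-1 = -p by ring, show (1:ℝ)-q-1 = -q by ring]
    field_simp
  -- derivative of G1
  have hG1d : ∀ t : ℝ, 0 < t → HasDerivAt G1 (G2 t) t := by
    intro t ht
    have h1 : HasDerivAt (fun x : ℝ => A*x) A t := by
      simpa using (hasDerivAt_id t).const_mul A
    have h2 := stmt17_cmul_rpow (lam*C) (-p) t ht
    have h3 := stmt17_cmul_rpow (lam*D) (-q) t ht
    have h4 := stmt17_cmul_rpow (θ*B) (α+β-1) t ht
    rw [hG1def]
    refine (((h1.sub h2).sub h3).sub h4).congr_deriv (Eq.symm ?_)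
    rw [hG2def, show α+β-1-1 = α+β-2 by ring]
    ring
  -- derivative of Qn
  have hQd : ∀ t : ℝ, 0 < t → HasDerivAt Qn
      (((2*A*t - θ*B*(α+β)*t^(α+β-1)) * (C*t^(1-p) + D*t^(1-q))
        - (A * t ^ (2:ℝ) - θ*B*t^(α+β)) * (C*(1-p)*t^(-p) + D*(1-q)*t^(-q)))
        / (C*t^(1-p) + D*t^(1-q))^2) t := by
    intro t ht
    rw [hQn]
    have h1 := stmt17_cmul_rpow A 2 t ht
    have h2 := stmt17_cmul_rpow (θ*B) (α+β) t ht
    have h3 := stmt17_cmul_rpow C (1-p) t ht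
    have h4 := stmt17_cmul_rpow D (1-q) t ht
    refine ((h1.sub h2).div (h3.add h4) (hMpos t ht).ne').congr_deriv (Eq.symm ?_)
    rw [show (2:ℝ)-1 = 1 by norm_num, Real.rpow_one,
      show (1:ℝ)-p-1 = -p by ring, show (1:ℝ)-q-1 = -q by ring]
    simp only [Pi.add_apply, Pi.sub_apply]
    ring
  have hQc : ∀ s : Set ℝ, s ⊆ Ioi 0 → ContinuousOn Qn s :=
    fun s hs t ht => ((hQd t (hs ht)).continuousAt).continuousWithinAt
  have hγcont : ∀ s : Set ℝ, s ⊆ Ioi 0 → ContinuousOn γ s :=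
    fun s hs t ht => ((hγd t (hs ht)).continuousAt).continuousWithinAt
  -- key algebraic identity I1
  have hI1 : ∀ t : ℝ, 0 < t →
      A * t ^ (2:ℝ) - θ*B*t^(α+β) - lam * (C*t^(1-p) + D*t^(1-q)) = t * G1 t := by
    intro t ht
    have e2 : t^(2:ℝ) = t*t := by
      rw [show (2:ℝ) = 1+1 by norm_num, Real.rpow_add_one ht.ne', Real.rpow_one]
    have e3 : t^(1-p) = t^(-p)*t := by
      rw [stmt17_rpow_split t (1-p) ht.ne', show (1:ℝ)-p-1 = -p by ring]
    have e4 : t^(1-q) = t^(-q)*t := by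
      rw [stmt17_rpow_split t (1-q) ht.ne', show (1:ℝ)-q-1 = -q by ring]
    have e5 : t^(α+β) = t^(α+β-1)*t :=
      stmt17_rpow_split t (α+β) ht.ne'
    rw [hG1def, e2, e3, e4, e5]
    ring
  -- characterization of solutions
  have hQsol : ∀ t : ℝ, 0 < t → (Qn t = lam ↔ G1 t = 0) := by
    intro t ht
    rw [hQval t, div_eq_iff (hMpos t ht).ne']
    constructor
    · intro h
      have h0 : t * G1 t = 0 := by rw [← hI1 t ht, h]; ring
      rcases mul_eq_zero.1 h0 with h'|h'
      · exact absurd h' ht.ne'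
      · exact h'
    · intro h
      have := hI1 t ht
      rw [h, mul_zero] at this
      linarith
  -- G1 expressed through Qn
  have hG1eq : ∀ t : ℝ, 0 < t →
      G1 t = (C*t^(1-p) + D*t^(1-q)) * (Qn t - lam) / t := by
    intro t ht
    have h1 : A * t ^ (2:ℝ) - θ*B*t^(α+β) = Qn t * (C*t^(1-p) + D*t^(1-q)) := by
      rw [hQval t, div_mul_cancel₀ _ (hMpos t ht).ne']
    have h2 := hI1 t ht
    rw [h1] at h2
    rw [eq_div_iff ht.ne']
    linear_combination -h2
  have hG1neg : ∀ t : ℝ, 0 < t → Qn t < lam → G1 t < 0 := by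
    intro t ht h
    rw [hG1eq t ht]
    exact div_neg_of_neg_of_pos (mul_neg_of_pos_of_neg (hMpos t ht) (by linarith)) ht
  have hG1pos : ∀ t : ℝ, 0 < t → lam < Qn t → 0 < G1 t := by
    intro t ht h
    rw [hG1eq t ht]
    exact div_pos (mul_pos (hMpos t ht) (by linarith)) ht
  -- small values of Qn
  set s0 : ℝ := min 1 (lam*C/(2*A)) with hs0def
  have hs0pos : 0 < s0 := lt_min one_pos (by positivity)
  have hsmall : ∀ t : ℝ, 0 < t → t ≤ s0 → Qn t < lam := by
    intro t ht hts
    have ht1 : t ≤ 1 := hts.trans (min_le_left _ _)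
    have ht2 : t ≤ lam*C/(2*A) := hts.trans (min_le_right _ _)
    have hMp := hMpos t ht
    have hb1 : Qn t ≤ (A * t ^ (2:ℝ)) / (C*t^(1-p) + D*t^(1-q)) := by
      rw [hQval t]
      gcongr
      have h0 : 0 ≤ θ*B*t^(α+β) := by positivity
      linarith
    have hb2 : (A * t ^ (2:ℝ)) / (C*t^(1-p) + D*t^(1-q)) ≤ (A * t ^ (2:ℝ)) / (C*t^(1-p)) := by
      gcongr
      have h0 : 0 ≤ D*t^(1-q) := by positivity
      linarith
    have hb3 : (A * t ^ (2:ℝ)) / (C*t^(1-p)) = (A/C) * t^(1+p) := by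
      have e : t^(2:ℝ) = t^(1+p) * t^(1-p) := by
        rw [← Real.rpow_add ht]; congr 1; ring
      have hpne : t^(1-p) ≠ 0 := (Real.rpow_pos_of_pos ht _).ne'
      rw [e]
      field_simp
    have hb4 : t^(1+p) ≤ t := by
      calc t^(1+p) ≤ t^(1:ℝ) := Real.rpow_le_rpow_of_exponent_ge ht ht1 (by linarith)
      _ = t := Real.rpow_one t
    have hb5 : (A/C) * t^(1+p) ≤ (A/C) * t := by gcongr
    have hb6 : (A/C) * t ≤ (A/C) * (lam*C/(2*A)) := by gcongr
    have hb7 : (A/C) * (lam*C/(2*A)) = lam/2 := by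
      field_simp
    calc Qn t ≤ (A * t ^ (2:ℝ)) / (C*t^(1-p) + D*t^(1-q)) := hb1
    _ ≤ (A * t ^ (2:ℝ)) / (C*t^(1-p)) := hb2
    _ = (A/C) * t^(1+p) := hb3
    _ ≤ (A/C) * t := hb5
    _ ≤ lam/2 := by rw [← hb7]; exact hb6
    _ < lam := by linarith
  -- large values of Qn
  set b0 : ℝ := max 1 ((A/(θ*B)+1) ^ (α+β-2)⁻¹) with hb0def
  have hbig : ∀ t : ℝ, b0 ≤ t → Qn t < 0 := by
    intro t hbt
    have ht1 : (1:ℝ) ≤ t := le_trans (le_max_left _ _) hbt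
    have ht : 0 < t := lt_of_lt_of_le one_pos ht1
    have hε : (0:ℝ) < α+β-2 := by linarith
    have hKpos : (0:ℝ) < A/(θ*B)+1 := by positivity
    have h1 : A/(θ*B)+1 ≤ t^(α+β-2) := by
      calc A/(θ*B)+1 = ((A/(θ*B)+1) ^ (α+β-2)⁻¹) ^ (α+β-2) :=
        (Real.rpow_inv_rpow hKpos.le hε.ne').symm
      _ ≤ t^(α+β-2) := by
        apply Real.rpow_le_rpow (by positivity) (le_trans (le_max_right _ _) hbt) hε.le
    have h2 : A < θ*B*t^(α+β-2) := by
      have h3 : A/(θ*B) < t^(α+β-2) := by linarith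
      have h4 := (div_lt_iff₀ (by positivity : (0:ℝ) < θ*B)).1 h3
      linarith [h4]
    rw [hQval t]
    apply div_neg_of_neg_of_pos _ (hMpos t ht)
    have e : t^(α+β) = t^(2:ℝ) * t^(α+β-2) := by
      rw [← Real.rpow_add ht]; congr 1; ring
    rw [e]
    have ht2 : 0 < t^(2:ℝ) := Real.rpow_pos_of_pos ht _
    nlinarith
  -- existence of tp
  have ha : 0 < min s0 (tn/2) := lt_min hs0pos (by linarith)
  have haQ : Qn (min s0 (tn/2)) < lam := hsmall _ ha (min_le_left _ _)
  have hale : min s0 (tn/2) ≤ tn := le_trans (min_le_right _ _) (by linarith)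
  obtain ⟨tp, htpmem, htpval⟩ :=
    intermediate_value_Icc hale (hQc _ (fun x hx => lt_of_lt_of_le ha hx.1))
      ⟨haQ.le, hlamlt.le⟩
  have htp0 : 0 < tp := lt_of_lt_of_le ha htpmem.1
  have htptn : tp < tn := lt_of_le_of_ne htpmem.2 (fun h => by rw [h] at htpval; linarith)
  -- existence of tm
  have hble : tn ≤ max b0 (tn+1) := le_trans (by linarith) (le_max_right _ _)
  have hbQ : Qn (max b0 (tn+1)) < lam := lt_trans (hbig _ (le_max_left _ _)) hlam
  obtain ⟨tm, htmmem, htmval⟩ :=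
    intermediate_value_Icc' hble (hQc _ (fun x hx => lt_of_lt_of_le htn hx.1))
      ⟨hbQ.le, hlamlt.le⟩
  have htntm : tn < tm := lt_of_le_of_ne htmmem.1 (fun h => by rw [← h] at htmval; linarith)
  have htm0 : 0 < tm := lt_trans htn htntm
  have htptm : tp < tm := lt_trans htptn htntm
  -- uniqueness
  have huniq : ∀ t : ℝ, 0 < t → Qn t = lam → t = tp ∨ t = tm := by
    intro t ht hval
    rcases lt_trichotomy t tn with hlt | heq | hgt
    · left
      by_contra hne
      rcases lt_or_gt_of_ne hne with h1 | h2
      · obtain ⟨c, hc, hc0⟩ := exists_deriv_eq_zero h1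
          (hQc _ (fun x hx => lt_of_lt_of_le ht hx.1)) (hval.trans htpval.symm)
        have := htnuniq c (lt_trans ht hc.1) hc0
        linarith [hc.2]
      · obtain ⟨c, hc, hc0⟩ := exists_deriv_eq_zero h2
          (hQc _ (fun x hx => lt_of_lt_of_le htp0 hx.1)) (htpval.trans hval.symm)
        have := htnuniq c (lt_trans htp0 hc.1) hc0
        linarith [hc.2]
    · exfalso; rw [heq] at hval; linarith
    · right
      by_contra hne
      rcases lt_or_gt_of_ne hne with h1 | h2
      · obtain ⟨c, hc, hc0⟩ := exists_deriv_eq_zero h1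
          (hQc _ (fun x hx => lt_of_lt_of_le ht hx.1)) (hval.trans htmval.symm)
        have := htnuniq c (lt_trans ht hc.1) hc0
        linarith [hc.1]
      · obtain ⟨c, hc, hc0⟩ := exists_deriv_eq_zero h2
          (hQc _ (fun x hx => lt_of_lt_of_le htm0 hx.1)) (htmval.trans hval.symm)
        have := htnuniq c (lt_trans htm0 hc.1) hc0
        linarith [hc.1]
  -- sign of Qn - lam on subintervals
  have hsign1 : ∀ t : ℝ, 0 < t → t < tp → Qn t < lam := by
    intro t ht http
    have hne : Qn t ≠ lam := by
      intro h
      rcases huniq t ht h with h'|h' <;> linarith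
    rcases le_or_gt t s0 with h | h
    · exact hsmall t ht h
    · by_contra hcon
      push_neg at hcon
      have hlt : lam < Qn t := lt_of_le_of_ne hcon (Ne.symm hne)
      obtain ⟨s, hsmem, hsval⟩ := intermediate_value_Icc h.le
        (hQc _ (fun x hx => lt_of_lt_of_le hs0pos hx.1))
        ⟨(hsmall s0 hs0pos le_rfl).le, hlt.le⟩
      rcases huniq s (lt_of_lt_of_le hs0pos hsmem.1) hsval with h'|h' <;>
        [linarith [hsmem.2]; linarith [hsmem.2]]
  have hsign2 : ∀ t : ℝ, tp < t → t < tn → lam < Qn t := by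
    intro t h1 h2
    have ht : 0 < t := lt_trans htp0 h1
    have hne : Qn t ≠ lam := by
      intro h
      rcases huniq t ht h with h'|h' <;> linarith
    by_contra hcon
    push_neg at hcon
    have hlt : Qn t < lam := lt_of_le_of_ne hcon hne
    obtain ⟨s, hsmem, hsval⟩ := intermediate_value_Icc h2.le
      (hQc _ (fun x hx => lt_of_lt_of_le ht hx.1)) ⟨hlt.le, hlamlt.le⟩
    rcases huniq s (lt_of_lt_of_le ht hsmem.1) hsval with h'|h' <;>
      [linarith [hsmem.1]; linarith [hsmem.2]]
  have hsign3 : ∀ t : ℝ, tn < t → t < tm → lam < Qn t := by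
    intro t h1 h2
    have ht : 0 < t := lt_trans htn h1
    have hne : Qn t ≠ lam := by
      intro h
      rcases huniq t ht h with h'|h' <;> linarith
    by_contra hcon
    push_neg at hcon
    have hlt : Qn t < lam := lt_of_le_of_ne hcon hne
    obtain ⟨s, hsmem, hsval⟩ := intermediate_value_Icc' h1.le
      (hQc _ (fun x hx => lt_of_lt_of_le htn hx.1)) ⟨hlt.le, hlamlt.le⟩
    rcases huniq s (lt_of_lt_of_le htn hsmem.1) hsval with h'|h' <;>
      [linarith [hsmem.1]; linarith [hsmem.2]]
  have hsign4 : ∀ t : ℝ, tm < t → Qn t < lam := by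
    intro t h1
    have ht : 0 < t := lt_trans htm0 h1
    have hne : Qn t ≠ lam := by
      intro h
      rcases huniq t ht h with h'|h' <;> linarith
    by_contra hcon
    push_neg at hcon
    have hlt : lam < Qn t := lt_of_le_of_ne hcon (Ne.symm hne)
    have htb : t ≤ max b0 (t+1) := le_trans (by linarith) (le_max_right _ _)
    have hbQ' : Qn (max b0 (t+1)) < lam := lt_trans (hbig _ (le_max_left _ _)) hlam
    obtain ⟨s, hsmem, hsval⟩ := intermediate_value_Icc' htb
      (hQc _ (fun x hx => lt_of_lt_of_le ht hx.1)) ⟨hbQ'.le, hlt.le⟩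
    rcases huniq s (lt_of_lt_of_le ht hsmem.1) hsval with h'|h' <;>
      [linarith [hsmem.1]; linarith [hsmem.1]]
  -- deriv γ
  have hdγ : ∀ t : ℝ, 0 < t → deriv γ t = G1 t := fun t ht => (hγd t ht).deriv
  have hG1tp : G1 tp = 0 := (hQsol tp htp0).1 htpval
  have hG1tm : G1 tm = 0 := (hQsol tm htm0).1 htmval
  have hγuniq : ∀ t : ℝ, 0 < t → deriv γ t = 0 → t = tp ∨ t = tm := by
    intro t ht h
    exact huniq t ht ((hQsol t ht).2 (by rw [← hdγ t ht]; exact h))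
  -- second derivative
  have hdd : ∀ t : ℝ, 0 < t → deriv (deriv γ) t = G2 t := by
    intro t ht
    have hev : deriv γ =ᶠ[𝓝 t] G1 := by
      filter_upwards [Ioi_mem_nhds ht] with s hs using hdγ s hs
    rw [hev.deriv_eq]
    exact (hG1d t ht).deriv
  -- slope arguments for sign of G2
  have hG2tp_nonneg : 0 ≤ G2 tp := by
    have hts := hasDerivAt_iff_tendsto_slope.1 (hG1d tp htp0)
    refine ge_of_tendsto hts ?_
    filter_upwards [mem_nhdsWithin_of_mem_nhds (Ioo_mem_nhds htp0 htptn),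
      self_mem_nhdsWithin] with s hs hne
    have hsne : s ≠ tp := hne
    rw [slope_def_field, hG1tp, sub_zero]
    rcases lt_or_gt_of_ne hsne with h | h
    · exact le_of_lt (div_pos_of_neg_of_neg (hG1neg s hs.1 (hsign1 s hs.1 h)) (by linarith))
    · exact le_of_lt (div_pos (hG1pos s hs.1 (hsign2 s h hs.2)) (by linarith))
  have hG2tm_nonpos : G2 tm ≤ 0 := by
    have hts := hasDerivAt_iff_tendsto_slope.1 (hG1d tm htm0)
    refine le_of_tendsto hts ?_
    filter_upwards [mem_nhdsWithin_of_mem_nhds (Ioo_mem_nhds htntm (by linarith : tm < tm+1)),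
      self_mem_nhdsWithin] with s hs hne
    have hsne : s ≠ tm := hne
    have hs0 : 0 < s := lt_trans htn hs.1
    rw [slope_def_field, hG1tm, sub_zero]
    rcases lt_or_gt_of_ne hsne with h | h
    · exact le_of_lt (div_neg_of_pos_of_neg (hG1pos s hs0 (hsign3 s hs.1 h)) (by linarith))
    · exact le_of_lt (div_neg_of_neg_of_pos (hG1neg s hs0 (hsign4 s h)) (by linarith))
  -- deriv Qn at a solution in terms of G2
  have hQderiv_eq : ∀ t : ℝ, 0 < t → Qn t = lam → G1 t = 0 →
      deriv Qn t = t * G2 t / (C*t^(1-p) + D*t^(1-q)) := by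
    intro t ht hval hG10
    have hM := hMpos t ht
    have hNM : A * t ^ (2:ℝ) - θ*B*t^(α+β) = lam * (C*t^(1-p) + D*t^(1-q)) := by
      have h := hval
      rw [hQval t] at h
      exact (div_eq_iff hM.ne').1 h
    have e5' : t^(-p) = t^(-p-1)*t := stmt17_rpow_split t (-p) ht.ne'
    have e6' : t^(-q) = t^(-q-1)*t := stmt17_rpow_split t (-q) ht.ne'
    have e7' : t^(α+β-1) = t^(α+β-2)*t := by
      rw [stmt17_rpow_split t (α+β-1) ht.ne', show α+β-1-1 = α+β-2 by ring]
    have hI2 : (2*A*t - θ*B*(α+β)*t^(α+β-1))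
        - lam*(C*(1-p)*t^(-p) + D*(1-q)*t^(-q)) = t * G2 t + G1 t := by
      simp only [hG1def, hG2def]
      rw [e5', e6', e7']
      ring
    rw [hG10, add_zero] at hI2
    rw [(hQd t ht).deriv, hNM]
    rw [div_eq_div_iff (by positivity) hM.ne']
    linear_combination hI2 * (C*t^(1-p) + D*t^(1-q))^2
  have hG2tp_pos : 0 < G2 tp := by
    rcases lt_or_eq_of_le hG2tp_nonneg with h | h
    · exact h
    · exfalso
      have hd := hQderiv_eq tp htp0 htpval hG1tp
      rw [← h, mul_zero, zero_div] at hd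
      have := htnuniq tp htp0 hd
      linarith
  have hG2tm_neg : G2 tm < 0 := by
    rcases lt_or_eq_of_le hG2tm_nonpos with h | h
    · exact h
    · exfalso
      have hd := hQderiv_eq tm htm0 htmval hG1tm
      rw [h, mul_zero, zero_div] at hd
      have := htnuniq tm htm0 hd
      linarith
  -- local min at tp
  have hmin : IsLocalMin γ tp := by
    have hl2 : tp/2 < tp := by linarith
    have hr : tp < (tp+tn)/2 := by linarith
    have hr2 : (tp+tn)/2 < tn := by linarith
    have hanti : AntitoneOn γ (Icc (tp/2) tp) := by
      apply antitoneOn_of_deriv_nonpos (convex_Icc _ _)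
        (hγcont _ (fun x hx => lt_of_lt_of_le (by linarith : (0:ℝ) < tp/2) hx.1))
      · intro x hx
        rw [interior_Icc] at hx
        exact ((hγd x (by linarith [hx.1])).differentiableAt).differentiableWithinAt
      · intro x hx
        rw [interior_Icc] at hx
        have hx0 : 0 < x := by linarith [hx.1]
        rw [hdγ x hx0]
        exact (hG1neg x hx0 (hsign1 x hx0 hx.2)).le
    have hmono : MonotoneOn γ (Icc tp ((tp+tn)/2)) := by
      apply monotoneOn_of_deriv_nonneg (convex_Icc _ _)
        (hγcont _ (fun x hx => lt_of_lt_of_le htp0 hx.1))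
      · intro x hx
        rw [interior_Icc] at hx
        exact ((hγd x (lt_trans htp0 hx.1)).differentiableAt).differentiableWithinAt
      · intro x hx
        rw [interior_Icc] at hx
        have hx0 : 0 < x := lt_trans htp0 hx.1
        rw [hdγ x hx0]
        exact (hG1pos x hx0 (hsign2 x hx.1 (lt_trans hx.2 hr2))).le
    have : ∀ᶠ x in 𝓝 tp, γ tp ≤ γ x := by
      filter_upwards [Ioo_mem_nhds hl2 hr] with x hx
      rcases le_total x tp with h | h
      · exact hanti ⟨hx.1.le, h⟩ ⟨hl2.le, le_rfl⟩ h
      · exact hmono ⟨le_rfl, hr.le⟩ ⟨h, hx.2.le⟩ h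
    exact this
  -- local max at tm
  have hmax : IsLocalMax γ tm := by
    have hl : (tn+tm)/2 < tm := by linarith
    have hl1 : tn < (tn+tm)/2 := by linarith
    have hr : tm < tm+1 := by linarith
    have hmono : MonotoneOn γ (Icc ((tn+tm)/2) tm) := by
      apply monotoneOn_of_deriv_nonneg (convex_Icc _ _)
        (hγcont _ (fun x hx => lt_of_lt_of_le (by linarith : (0:ℝ) < (tn+tm)/2) hx.1))
      · intro x hx
        rw [interior_Icc] at hx
        exact ((hγd x (by linarith [hx.1])).differentiableAt).differentiableWithinAt
      · intro x hx
        rw [interior_Icc] at hx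
        have hx0 : 0 < x := by linarith [hx.1]
        rw [hdγ x hx0]
        exact (hG1pos x hx0 (hsign3 x (lt_trans hl1 hx.1) hx.2)).le
    have hanti : AntitoneOn γ (Icc tm (tm+1)) := by
      apply antitoneOn_of_deriv_nonpos (convex_Icc _ _)
        (hγcont _ (fun x hx => lt_of_lt_of_le htm0 hx.1))
      · intro x hx
        rw [interior_Icc] at hx
        exact ((hγd x (lt_trans htm0 hx.1)).differentiableAt).differentiableWithinAt
      · intro x hx
        rw [interior_Icc] at hx
        have hx0 : 0 < x := lt_trans htm0 hx.1
        rw [hdγ x hx0]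
        exact (hG1neg x hx0 (hsign4 x hx.1)).le
    have : ∀ᶠ x in 𝓝 tm, γ x ≤ γ tm := by
      filter_upwards [Ioo_mem_nhds hl hr] with x hx
      rcases le_total x tm with h | h
      · exact hmono ⟨hx.1.le, h⟩ ⟨hl.le, le_rfl⟩ h
      · exact hanti ⟨le_rfl, hr.le⟩ ⟨h, hx.2.le⟩ h
    exact this
  exact ⟨tp, tm, htp0, htptn, htntm, htpval, htmval, huniq,
    by rw [hdγ tp htp0]; exact hG1tp,
    by rw [hdγ tm htm0]; exact hG1tm,
    hγuniq,
    by rw [hdd tp htp0]; exact hG2tp_pos,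
    by rw [hdd tm htm0]; exact hG2tm_neg,
    hmin, hmax⟩
end
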